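/- arXiv:2308.10479 — 9 statements merged into one kernel-verified Lean document; each statement's English description precedes it below -/
import Mathlib

section
/- Let F be an infinite collection of closed bounded intervals in ℝ such that F cannot be pierced by any finite set of points (i.e., for every finite set P ⊂ ℝ there is an interval in F disjoint from P). Then F contains an infinite sequence of pairwise disjoint intervals. -/
open Set

/-- An axis-parallel box in `ℝ^d`: a product of closed bounded intervals. -/
def IsBox {d : ℕ} (B : Set (Fin d → ℝ)) : Prop :=
  ∃ a b : Fin d → ℝ, (∀ i, a i ≤ b i) ∧ B = {x | ∀ i, x i ∈ Set.Icc (a i) (b i)}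

/-- An axis-parallel `k`-flat in `ℝ^d`: coordinates in a set `I` of size `d - k` are fixed. -/
def IsAxisFlat {d : ℕ} (k : ℕ) (K : Set (Fin d → ℝ)) : Prop :=
  ∃ (I : Finset (Fin d)) (c : Fin d → ℝ), I.card = d - k ∧ K = {x | ∀ i ∈ I, x i = c i}

/-- An axis-parallel hyperplane in `ℝ^d`. -/
def IsAxisHyperplane {d : ℕ} (H : Set (Fin d → ℝ)) : Prop :=
  ∃ (i : Fin d) (c : ℝ), H = {x | x i = c}

/-- `F` is pierceable by finitely many axis-parallel `k`-flats. -/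
def PiercedByFlats {d : ℕ} (k : ℕ) (F : Set (Set (Fin d → ℝ))) : Prop :=
  ∃ K : Finset (Set (Fin d → ℝ)), (∀ f ∈ K, IsAxisFlat k f) ∧
    ∀ B ∈ F, ∃ f ∈ K, (B ∩ f).Nonempty

/-- `F` is pierceable by finitely many axis-parallel hyperplanes. -/
def PiercedByHyperplanes {d : ℕ} (F : Set (Set (Fin d → ℝ))) : Prop :=
  ∃ H : Finset (Set (Fin d → ℝ)), (∀ h ∈ H, IsAxisHyperplane h) ∧
    ∀ B ∈ F, ∃ h ∈ H, (B ∩ h).Nonempty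

namespace Stmt0Aux

def Good (T : Set (ℝ × ℝ)) : Prop :=
  ∀ P : Finset ℝ, ∃ q ∈ T, ∀ p ∈ P, p ∉ Set.Icc q.1 q.2

def CondPt (T : Set (ℝ × ℝ)) (p : ℝ) : Prop :=
  ∀ δ : ℝ, 0 < δ → ∃ q ∈ T, p - δ < q.1 ∧ q.2 < p + δ ∧ p ∉ Set.Icc q.1 q.2

lemma condpt_case (T : Set (ℝ × ℝ)) (hle : ∀ q ∈ T, q.1 ≤ q.2) (p : ℝ) (hc : CondPt T p) :
    ∃ g : ℕ → ℝ × ℝ, (∀ n, g n ∈ T) ∧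
      ∀ i j : ℕ, i < j → Icc (g i).1 (g i).2 ∩ Icc (g j).1 (g j).2 = ∅ := by
  classical
  set D : ℝ × ℝ → ℝ := fun q => if q.2 < p then p - q.2 else q.1 - p with hD
  have hside : ∀ q : ℝ × ℝ, p ∉ Icc q.1 q.2 → p < q.1 ∨ q.2 < p := by
    intro q hq
    rw [Set.mem_Icc, not_and_or, not_le, not_le] at hq
    tauto
  have hDpos : ∀ q : ℝ × ℝ, p ∉ Icc q.1 q.2 → 0 < D q := by
    intro q hq
    by_cases h : q.2 < p
    · simp only [hD, if_pos h]; linarith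
    · rcases hside q hq with h' | h'
      · simp only [hD, if_neg h]; linarith
      · exact absurd h' h
  have hball : ∀ q : ℝ × ℝ, p ∉ Icc q.1 q.2 →
      ∀ x ∈ Icc q.1 q.2, x ∉ Ioo (p - D q) (p + D q) := by
    intro q hq x hx hx'
    rw [Set.mem_Icc] at hx
    rw [Set.mem_Ioo] at hx'
    by_cases h : q.2 < p
    · simp only [hD, if_pos h] at hx'; linarith [hx.2, hx'.1]
    · rcases hside q hq with h' | h'
      · simp only [hD, if_neg h] at hx'; linarith [hx.1, hx'.2]
      · exact absurd h' h
  have hDlt : ∀ q r : ℝ × ℝ, r.1 ≤ r.2 → p ∉ Icc r.1 r.2 →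
      p - D q < r.1 → r.2 < p + D q → D r < D q := by
    intro q r hr12 hr h1 h2
    by_cases h : r.2 < p
    · simp only [hD, if_pos h]; linarith
    · rcases hside r hr with h' | h'
      · simp only [hD, if_neg h]; linarith
      · exact absurd h' h
  -- the state type
  let St := {q : ℝ × ℝ // q ∈ T ∧ p ∉ Icc q.1 q.2}
  have step : ∀ s : St, ∃ s' : St, p - D s.1 < s'.1.1 ∧ s'.1.2 < p + D s.1 := by
    intro s
    obtain ⟨r, hrT, h1, h2, h3⟩ := hc (D s.1) (hDpos s.1 s.2.2)
    exact ⟨⟨r, hrT, h3⟩, h1, h2⟩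
  choose f hf1 hf2 using step
  obtain ⟨q0, hq0T, _, _, hq0p⟩ := hc 1 one_pos
  let g : ℕ → St := fun n => f^[n] ⟨q0, hq0T, hq0p⟩
  have hgsucc : ∀ n, g (n + 1) = f (g n) := by
    intro n
    simp only [g, Function.iterate_succ_apply']
  have hDdec : ∀ n, D (g (n + 1)).1 < D (g n).1 := by
    intro n
    rw [hgsucc n]
    exact hDlt (g n).1 (f (g n)).1 (hle _ (f (g n)).2.1) (f (g n)).2.2 (hf1 (g n)) (hf2 (g n))
  have hDmono : ∀ i j : ℕ, i ≤ j → D (g j).1 ≤ D (g i).1 := by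
    intro i j hij
    induction j with
    | zero => simp_all
    | succ n ih =>
      rcases Nat.lt_or_ge i (n + 1) with h | h
      · exact le_trans (le_of_lt (hDdec n)) (ih (Nat.lt_succ_iff.mp h))
      · have : i = n + 1 := le_antisymm hij h
        simp [this]
  refine ⟨fun n => (g n).1, fun n => (g n).2.1, ?_⟩
  intro i j hij
  rw [Set.eq_empty_iff_forall_notMem]
  intro x hx
  obtain ⟨hxi, hxj⟩ := hx
  -- x ∈ Icc (g j) ⊆ Ioo (p - D (g i)) (p + D (g i))
  obtain ⟨m, hm⟩ : ∃ m, j = m + 1 := ⟨j - 1, (Nat.succ_pred_eq_of_pos (Nat.lt_of_le_of_lt (Nat.zero_le i) hij)).symm⟩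
  have him : i ≤ m := by omega
  have h1 : p - D (g m).1 < (g j).1.1 := by rw [hm]; rw [hgsucc m]; exact hf1 (g m)
  have h2 : (g j).1.2 < p + D (g m).1 := by rw [hm]; rw [hgsucc m]; exact hf2 (g m)
  have hDle := hDmono i m him
  rw [Set.mem_Icc] at hxj
  have : x ∈ Ioo (p - D (g i).1) (p + D (g i).1) := by
    rw [Set.mem_Ioo]
    constructor <;> linarith [hxj.1, hxj.2]
  exact hball (g i).1 (g i).2.2 x hxi this


lemma exists_good_sub (T : Set (ℝ × ℝ)) (hle : ∀ q ∈ T, q.1 ≤ q.2) (hg : Good T)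
    (hnc : ∀ p : ℝ, ¬ CondPt T p) :
    ∃ q ∈ T, Good {r ∈ T | Icc r.1 r.2 ∩ Icc q.1 q.2 = ∅} := by
  classical
  by_contra hcon
  push_neg at hcon
  -- for each q ∈ T, a finite piercing set for the intervals disjoint from q
  have hP : ∀ q ∈ T, ∃ P : Finset ℝ, ∀ r ∈ T, Icc r.1 r.2 ∩ Icc q.1 q.2 = ∅ →
      ∃ p ∈ P, p ∈ Icc r.1 r.2 := by
    intro q hq
    have := hcon q hq
    rw [Good] at this
    push_neg at this
    obtain ⟨P, hP⟩ := this
    refine ⟨P, fun r hr hdisj => ?_⟩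
    have := hP r
    simp only [Set.mem_sep_iff] at this
    obtain ⟨p, hp1, hp2⟩ := this ⟨hr, hdisj⟩
    exact ⟨p, hp1, hp2⟩
  choose! P hPspec using hP
  -- the families of intervals strictly nested inside q are "good"
  have hN : ∀ q ∈ T, ∀ Q : Finset ℝ,
      ∃ r ∈ T, q.1 < r.1 ∧ r.2 < q.2 ∧ ∀ x ∈ Q, x ∉ Icc r.1 r.2 := by
    intro q hq Q
    obtain ⟨r, hrT, hravoid⟩ := hg (Q ∪ P q ∪ {q.1, q.2})
    have hrnd : ¬ (Icc r.1 r.2 ∩ Icc q.1 q.2 = ∅) := by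
      intro hdisj
      obtain ⟨p, hp1, hp2⟩ := hPspec q hq r hrT hdisj
      exact hravoid p (by simp [Finset.mem_union, hp1]) hp2
    rw [Set.eq_empty_iff_forall_notMem] at hrnd
    push_neg at hrnd
    obtain ⟨x, hxr, hxq⟩ := hrnd
    rw [Set.mem_Icc] at hxr hxq
    have hq1 : q.1 ∉ Icc r.1 r.2 := hravoid q.1 (by simp [Finset.mem_union])
    have hq2 : q.2 ∉ Icc r.1 r.2 := hravoid q.2 (by simp [Finset.mem_union])
    rw [Set.mem_Icc, not_and_or, not_le, not_le] at hq1 hq2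
    have h1 : q.1 < r.1 := by rcases hq1 with h | h; exact h; linarith [hxr.2, hxq.1]
    have h2 : r.2 < q.2 := by rcases hq2 with h | h; linarith [hxr.1, hxq.2]; exact h
    exact ⟨r, hrT, h1, h2, fun x hx => hravoid x (by simp [Finset.mem_union, hx])⟩
  -- build a nested shrinking sequence
  let St := {q : ℝ × ℝ // q ∈ T}
  have step : ∀ s : St, ∃ s' : St, s.1.1 < s'.1.1 ∧ s'.1.2 < s.1.2 ∧
      s'.1.2 - s'.1.1 ≤ (s.1.2 - s.1.1) / 2 := by
    intro s
    obtain ⟨r, hrT, h1, h2, h3⟩ := hN s.1 s.2 {(s.1.1 + s.1.2) / 2}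
    have hm := h3 ((s.1.1 + s.1.2) / 2) (Finset.mem_singleton_self _)
    rw [Set.mem_Icc, not_and_or, not_le, not_le] at hm
    refine ⟨⟨r, hrT⟩, h1, h2, ?_⟩
    have hr12 := hle r hrT
    rcases hm with h | h
    · linarith
    · linarith
  choose f hf1 hf2 hf3 using step
  obtain ⟨q0, hq0T, _⟩ := hg ∅
  let g : ℕ → St := fun n => f^[n] ⟨q0, hq0T⟩
  have hgsucc : ∀ n, g (n + 1) = f (g n) := fun n => Function.iterate_succ_apply' f n _
  set a : ℕ → ℝ := fun n => (g n).1.1 with ha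
  set b : ℕ → ℝ := fun n => (g n).1.2 with hb
  have hab : ∀ n, a n ≤ b n := fun n => hle (g n).1 (g n).2
  have haS : ∀ n, a n < a (n + 1) := by intro n; simpa [ha, hgsucc n] using hf1 (g n)
  have hbS : ∀ n, b (n + 1) < b n := by intro n; simpa [hb, hgsucc n] using hf2 (g n)
  have hlen : ∀ n, b (n + 1) - a (n + 1) ≤ (b n - a n) / 2 := by
    intro n; simpa [ha, hb, hgsucc n] using hf3 (g n)
  have hamono : ∀ i j : ℕ, i ≤ j → a i ≤ a j := by
    intro i j hij
    induction j with
    | zero => simp_all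
    | succ n ih =>
      rcases Nat.lt_or_ge i (n + 1) with h | h
      · exact le_trans (ih (Nat.lt_succ_iff.mp h)) (le_of_lt (haS n))
      · have : i = n + 1 := le_antisymm hij h
        simp [this]
  have hbmono : ∀ i j : ℕ, i ≤ j → b j ≤ b i := by
    intro i j hij
    induction j with
    | zero => simp_all
    | succ n ih =>
      rcases Nat.lt_or_ge i (n + 1) with h | h
      · exact le_trans (le_of_lt (hbS n)) (ih (Nat.lt_succ_iff.mp h))
      · have : i = n + 1 := le_antisymm hij h
        simp [this]
  have hlenpow : ∀ n, b n - a n ≤ (b 0 - a 0) / 2 ^ n := by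
    intro n
    induction n with
    | zero => simp
    | succ n ih =>
      calc b (n + 1) - a (n + 1) ≤ (b n - a n) / 2 := hlen n
        _ ≤ ((b 0 - a 0) / 2 ^ n) / 2 := by linarith
        _ = (b 0 - a 0) / 2 ^ (n + 1) := by ring
  -- the limit point
  have hbdd : BddAbove (Set.range a) := by
    refine ⟨b 0, ?_⟩
    rintro x ⟨n, rfl⟩
    exact le_trans (hab n) (hbmono 0 n (Nat.zero_le n))
  set p : ℝ := sSup (Set.range a) with hp
  have hap : ∀ n, a n ≤ p := fun n => le_csSup hbdd ⟨n, rfl⟩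
  have hpb : ∀ n, p ≤ b n := by
    intro n
    refine csSup_le ⟨a 0, 0, rfl⟩ ?_
    rintro x ⟨m, rfl⟩
    calc a m ≤ a (max m n) := hamono m _ (le_max_left m n)
      _ ≤ b (max m n) := hab _
      _ ≤ b n := hbmono n _ (le_max_right m n)
  -- p is a condensation point, contradiction
  apply hnc p
  intro δ hδ
  obtain ⟨n, hn⟩ : ∃ n : ℕ, (b 0 - a 0) / δ < 2 ^ n := pow_unbounded_of_one_lt _ one_lt_two
  have h2n : (0:ℝ) < 2 ^ n := by positivity
  have hsmall : b n - a n < δ := by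
    have : (b 0 - a 0) / 2 ^ n < δ := by
      rw [div_lt_iff₀ h2n]
      rw [div_lt_iff₀ hδ] at hn
      linarith
    linarith [hlenpow n]
  obtain ⟨r, hrT, h1, h2, h3⟩ := hN (g n).1 (g n).2 {p}
  refine ⟨r, hrT, ?_, ?_, h3 p (Finset.mem_singleton_self _)⟩
  · have : p - δ < a n := by linarith [hpb n]
    exact lt_trans this h1
  · have : b n < p + δ := by linarith [hap n]
    exact lt_trans h2 this


lemma good_seq (T : Set (ℝ × ℝ)) (hle : ∀ q ∈ T, q.1 ≤ q.2) (hg : Good T) :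
    ∃ g : ℕ → ℝ × ℝ, (∀ n, g n ∈ T) ∧
      ∀ i j : ℕ, i < j → Icc (g i).1 (g i).2 ∩ Icc (g j).1 (g j).2 = ∅ := by
  classical
  by_cases hc : ∃ p : ℝ, CondPt T p
  · obtain ⟨p, hp⟩ := hc
    exact condpt_case T hle p hp
  · push_neg at hc
    let St := {T' : Set (ℝ × ℝ) // T' ⊆ T ∧ Good T'}
    have pick : ∀ s : St, ∃ q ∈ s.1, Good {r ∈ s.1 | Icc r.1 r.2 ∩ Icc q.1 q.2 = ∅} := by
      intro s
      refine exists_good_sub s.1 (fun q hq => hle q (s.2.1 hq)) s.2.2 (fun p hp => hc p ?_)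
      intro δ hδ
      obtain ⟨q, hq, h⟩ := hp δ hδ
      exact ⟨q, s.2.1 hq, h⟩
    choose pk hpk1 hpk2 using pick
    let step : St → St := fun s =>
      ⟨{r ∈ s.1 | Icc r.1 r.2 ∩ Icc (pk s).1 (pk s).2 = ∅},
        fun r hr => s.2.1 hr.1, hpk2 s⟩
    let seq : ℕ → St := fun n => step^[n] ⟨T, subset_rfl, hg⟩
    have hseqsucc : ∀ n, seq (n + 1) = step (seq n) := fun n =>
      Function.iterate_succ_apply' step n _
    have hmono : ∀ i j : ℕ, i ≤ j → (seq j).1 ⊆ (seq i).1 := by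
      intro i j hij
      induction j with
      | zero => simp_all
      | succ n ih =>
        rcases Nat.lt_or_ge i (n + 1) with h | h
        · refine subset_trans ?_ (ih (Nat.lt_succ_iff.mp h))
          rw [hseqsucc n]
          exact fun r hr => hr.1
        · have : i = n + 1 := le_antisymm hij h
          simp [this]
    refine ⟨fun n => pk (seq n), fun n => (seq n).2.1 (hpk1 (seq n)), ?_⟩
    intro i j hij
    have hj : pk (seq j) ∈ (seq (i + 1)).1 := hmono (i + 1) j hij (hpk1 (seq j))
    rw [hseqsucc i] at hj
    have := hj.2
    rw [Set.eq_empty_iff_forall_notMem] at this ⊢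
    intro x hx
    exact this x ⟨hx.2, hx.1⟩


end Stmt0Aux

open Stmt0Aux in
theorem stmt0 (F : Set (Set ℝ)) (hF : F.Infinite)
    (hbox : ∀ I ∈ F, ∃ a b : ℝ, a ≤ b ∧ I = Set.Icc a b)
    (hnp : ∀ P : Finset ℝ, ∃ I ∈ F, ∀ p ∈ P, p ∉ I) :
    ∃ f : ℕ → Set ℝ, (∀ n, f n ∈ F) ∧ Function.Injective f ∧
      ∀ i j : ℕ, i ≠ j → f i ∩ f j = ∅ := by
  classical
  set T : Set (ℝ × ℝ) := {q | q.1 ≤ q.2 ∧ Set.Icc q.1 q.2 ∈ F} with hT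
  have hle : ∀ q ∈ T, q.1 ≤ q.2 := fun q hq => hq.1
  have hg : Good T := by
    intro P
    obtain ⟨I, hIF, hI⟩ := hnp P
    obtain ⟨a, b, hab, rfl⟩ := hbox I hIF
    exact ⟨(a, b), ⟨hab, hIF⟩, hI⟩
  obtain ⟨g, hgT, hgd⟩ := good_seq T hle hg
  refine ⟨fun n => Set.Icc (g n).1 (g n).2, fun n => (hgT n).2, ?_, ?_⟩
  · intro i j hij
    simp only at hij
    by_contra hne
    rcases Ne.lt_or_gt hne with h | h
    · have := hgd i j h
      rw [hij, Set.inter_self] at this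
      exact (Set.nonempty_Icc.mpr (hgT j).1).ne_empty this
    · have := hgd j i h
      rw [← hij, Set.inter_self] at this
      exact (Set.nonempty_Icc.mpr (hgT i).1).ne_empty this
  · intro i j hij
    rcases Ne.lt_or_gt hij with h | h
    · exact hgd i j h
    · rw [Set.inter_comm]; exact hgd j i h
end

section
/- Let F be a family of closed bounded intervals in ℝ with the property that every infinite sequence of members of F contains two distinct members with nonempty intersection. Then F can be pierced by finitely many points. -/
/-!
Embed the intervals in the compact order `[-∞, ∞]`. Call a point `x` good if some neighbourhood
of `x` contains only members of `F` through `x`. If every point is good, finitely many good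
neighbourhoods, which may be taken to be intervals `[a, b]`, cover `[-∞, ∞]`; an interval lying in
one of them contains its centre, and one that does not contains one of its endpoints `a` or `b`.
At a bad point `x` we can instead pick members of `F` avoiding `x` inside ever smaller
neighbourhoods of `x`, each neighbourhood missing the (closed) members chosen before, which gives
infinitely many pairwise disjoint members of `F`.
-/

open Set

open Filter Topology Function

theorem exists_seq_pairwise_disjoint_of_forall_mem_nhds {X : Type*} [TopologicalSpace X]
    {F : Set (Set X)} (hF : ∀ I ∈ F, IsClosed I) {x : X}
    (hx : ∀ U ∈ 𝓝 x, ∃ I ∈ F, I ⊆ U ∧ x ∉ I) :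
    ∃ f : ℕ → Set X, (∀ n, f n ∈ F) ∧ Pairwise (Disjoint on f) := by
  choose I hIF hIU hxI using hx
  let U : ℕ → {U : Set X // U ∈ 𝓝 x} := fun n =>
    Nat.rec ⟨univ, univ_mem⟩
      (fun _ V => ⟨V.1 \ I V.1 V.2, inter_mem V.2 ((hF _ (hIF _ _)).compl_mem_nhds (hxI _ _))⟩) n
  let f : ℕ → Set X := fun n => I (U n).1 (U n).2
  have hU : Antitone fun n => (U n).1 := antitone_nat_of_succ_le fun _ => sdiff_subset
  have hfU : ∀ m n, n < m → f m ⊆ (f n)ᶜ := fun m n hnm =>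
    (hIU _ _).trans ((hU (Nat.succ_le_of_lt hnm)).trans fun _ hy => hy.2)
  refine ⟨f, fun n => hIF _ _, fun m n hmn => ?_⟩
  rcases hmn.lt_or_gt with h | h
  · exact (subset_compl_iff_disjoint_right.mp (hfU n m h)).symm
  · exact subset_compl_iff_disjoint_right.mp (hfU m n h)

theorem exists_finset_pierce_of_forall_mem_nhds {α : Type*} [LinearOrder α] [TopologicalSpace α]
    [OrderTopology α] [CompactSpace α] [Nonempty α] {F : Set (Set α)}
    (hF : ∀ I ∈ F, I.OrdConnected) (hgood : ∀ x, ∃ U ∈ 𝓝 x, ∀ I ∈ F, I ⊆ U → x ∈ I) :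
    ∃ P : Finset α, ∀ I ∈ F, ∃ p ∈ P, p ∈ I := by
  choose U hU hUF using hgood
  choose a b _ hab hsub using fun x => exists_Icc_mem_subset_of_mem_nhds (hU x)
  obtain ⟨t, ht⟩ := isCompact_univ.elim_finite_subcover (fun x => interior (Icc (a x) (b x)))
    (fun _ => isOpen_interior) fun x _ => mem_iUnion.mpr ⟨x, mem_interior_iff_mem_nhds.mpr (hab x)⟩
  classical
  refine ⟨t ∪ t.image a ∪ t.image b, fun I hI => ?_⟩
  obtain ⟨y, hyI⟩ : I.Nonempty := I.eq_empty_or_nonempty.resolve_left fun h => by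
    simpa [h] using hUF (Classical.arbitrary α) I hI (by simp [h])
  obtain ⟨x, hxt, hyx⟩ := mem_iUnion₂.mp (ht (mem_univ y))
  by_cases hIx : I ⊆ Icc (a x) (b x)
  · exact ⟨x, Finset.mem_union_left _ (Finset.mem_union_left _ hxt),
      hUF x I hI (hIx.trans (hsub x))⟩
  obtain ⟨z, hzI, hzx⟩ := not_subset.mp hIx
  have hy := interior_subset hyx
  rcases not_and_or.mp hzx with hz | hz
  · exact ⟨a x, Finset.mem_union_left _ (Finset.mem_union_right _ (Finset.mem_image_of_mem a hxt)),
       (hF I hI).out hzI hyI ⟨(not_le.mp hz).le, hy.1⟩⟩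
  · exact ⟨b x, Finset.mem_union_right _ (Finset.mem_image_of_mem b hxt),
       (hF I hI).out hyI hzI ⟨hy.2, (not_le.mp hz).le⟩⟩

theorem exists_finset_pierce_of_not_pairwise_disjoint {α : Type*} [LinearOrder α]
    [TopologicalSpace α] [OrderTopology α] [CompactSpace α] [Nonempty α] {F : Set (Set α)}
    (hclosed : ∀ I ∈ F, IsClosed I) (hconn : ∀ I ∈ F, I.OrdConnected)
    (hF : ∀ f : ℕ → Set α, (∀ n, f n ∈ F) → ¬ Pairwise (Disjoint on f)) :
    ∃ P : Finset α, ∀ I ∈ F, ∃ p ∈ P, p ∈ I := by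
  by_cases hbad : ∃ x, ∀ U ∈ 𝓝 x, ∃ I ∈ F, I ⊆ U ∧ x ∉ I
  · obtain ⟨x, hx⟩ := hbad
    obtain ⟨f, hfF, hf⟩ := exists_seq_pairwise_disjoint_of_forall_mem_nhds hclosed hx
    exact (hF f hfF hf).elim
  push Not at hbad
  exact exists_finset_pierce_of_forall_mem_nhds hconn hbad

theorem stmt1 (F : Set (Set ℝ))
    (hbox : ∀ I ∈ F, ∃ a b : ℝ, a ≤ b ∧ I = Set.Icc a b)
    (hprop : ∀ f : ℕ → Set ℝ, (∀ n, f n ∈ F) →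
      ∃ i j : ℕ, i ≠ j ∧ (f i ∩ f j).Nonempty) :
    ∃ P : Finset ℝ, ∀ I ∈ F, ∃ p ∈ P, p ∈ I := by
  have hIcc : ∀ J ∈ image ((↑) : ℝ → EReal) '' F, ∃ a b : ℝ, J = Icc (a : EReal) b := by
    rintro _ ⟨I, hI, rfl⟩
    obtain ⟨a, b, -, rfl⟩ := hbox I hI
    exact ⟨a, b, EReal.image_coe_Icc a b⟩
  obtain ⟨P, hP⟩ :=
    exists_finset_pierce_of_not_pairwise_disjoint (F := image ((↑) : ℝ → EReal) '' F)
      (fun J hJ => by obtain ⟨a, b, rfl⟩ := hIcc J hJ; exact isClosed_Icc)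
      (fun J hJ => by obtain ⟨a, b, rfl⟩ := hIcc J hJ; exact ordConnected_Icc)
      (fun g hg hdisj => by
        choose f hfF hfg using hg
        obtain ⟨i, j, hij, x, hxi, hxj⟩ := hprop f hfF
        exact (hdisj hij).ne_of_mem (hfg i ▸ mem_image_of_mem _ hxi)
          (hfg j ▸ mem_image_of_mem _ hxj) rfl)
  classical
  refine ⟨P.image EReal.toReal, fun I hI => ?_⟩
  obtain ⟨p, hpP, x, hxI, rfl⟩ := hP _ (mem_image_of_mem _ hI)
  exact ⟨x, Finset.mem_image.mpr ⟨x, hpP, EReal.toReal_coe x⟩, hxI⟩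
end

section
/- Let F be an infinite collection of axis-parallel boxes in ℝ^d that cannot be pierced by any finite collection of axis-parallel hyperplanes. Then F contains an infinite sequence {B_n} of boxes such that no axis-parallel hyperplane intersects two distinct boxes of the sequence. -/
open Set

/- ### Auxiliary material -/

private lemma pbh_mono {d : ℕ} {G G' : Set (Set (Fin d → ℝ))} (hsub : G' ⊆ G)
    (h : PiercedByHyperplanes G) : PiercedByHyperplanes G' := by
  obtain ⟨H, h1, h2⟩ := h
  exact ⟨H, h1, fun B hB => h2 B (hsub hB)⟩

private lemma pbh_empty {d : ℕ} : PiercedByHyperplanes (∅ : Set (Set (Fin d → ℝ))) :=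
  ⟨∅, fun f hf => absurd hf (Finset.notMem_empty f),
    fun B hB => absurd hB (Set.notMem_empty B)⟩

private lemma pbh_union {d : ℕ} {G G' : Set (Set (Fin d → ℝ))}
    (h : PiercedByHyperplanes G) (h' : PiercedByHyperplanes G') :
    PiercedByHyperplanes (G ∪ G') := by
  classical
  obtain ⟨H, h1, h2⟩ := h
  obtain ⟨H', h1', h2'⟩ := h'
  refine ⟨H ∪ H', ?_, ?_⟩
  · intro f hf
    rcases Finset.mem_union.1 hf with hf | hf
    exacts [h1 f hf, h1' f hf]
  · intro B hB
    rcases hB with hB | hB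
    · obtain ⟨f, hf, hBf⟩ := h2 B hB
      exact ⟨f, Finset.mem_union_left _ hf, hBf⟩
    · obtain ⟨f, hf, hBf⟩ := h2' B hB
      exact ⟨f, Finset.mem_union_right _ hf, hBf⟩

private lemma pbh_single {d : ℕ} {h : Set (Fin d → ℝ)} (hh : IsAxisHyperplane h) :
    PiercedByHyperplanes {B | (B ∩ h).Nonempty} :=
  ⟨{h}, by simpa using hh, fun B hB => ⟨h, Finset.mem_singleton_self h, hB⟩⟩

private lemma pbh_biUnion {d : ℕ} {ι : Type*} (f : ι → Set (Set (Fin d → ℝ))) :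
    ∀ (J : Finset ι), (∀ j ∈ J, PiercedByHyperplanes (f j)) →
    PiercedByHyperplanes (⋃ j ∈ J, f j) := by
  classical
  intro J
  induction J using Finset.induction_on with
  | empty =>
      intro _
      have h : (⋃ j ∈ (∅ : Finset ι), f j) = ∅ := by simp
      rw [h]
      exact pbh_empty
  | @insert a s ha ih =>
      intro hf
      rw [Finset.set_biUnion_insert]
      exact pbh_union (hf a (Finset.mem_insert_self a s))
        (ih fun j hj => hf j (Finset.mem_insert_of_mem hj))

private lemma nonempty_of_not_pbh {d : ℕ} {G : Set (Set (Fin d → ℝ))}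
    (h : ¬ PiercedByHyperplanes G) : G.Nonempty := by
  rcases Set.eq_empty_or_nonempty G with rfl | h'
  · exact absurd pbh_empty h
  · exact h'

private lemma box_meets {d : ℕ} {B : Set (Fin d → ℝ)} {a b : Fin d → ℝ}
    (hab : ∀ i, a i ≤ b i) (hBeq : B = {x | ∀ i, x i ∈ Set.Icc (a i) (b i)})
    (j : Fin d) (c : ℝ) :
    (B ∩ {x | x j = c}).Nonempty ↔ a j ≤ c ∧ c ≤ b j := by
  classical
  constructor
  · rintro ⟨x, hxB, hxj⟩
    have hxj' : x j = c := hxj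
    rw [hBeq] at hxB
    have h := hxB j
    rw [hxj'] at h
    exact ⟨h.1, h.2⟩
  · rintro ⟨h1, h2⟩
    refine ⟨Function.update a j c, ?_, ?_⟩
    · rw [hBeq]
      intro i
      rcases eq_or_ne i j with rfl | hne
      · simp [Set.mem_Icc, h1, h2]
      · simp [Function.update_of_ne hne, Set.mem_Icc, hab i]
    · simp

private lemma box_nonempty {d : ℕ} {B : Set (Fin d → ℝ)} {a b : Fin d → ℝ}
    (hab : ∀ i, a i ≤ b i) (hBeq : B = {x | ∀ i, x i ∈ Set.Icc (a i) (b i)}) :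
    B.Nonempty :=
  ⟨a, by rw [hBeq]; intro i; exact ⟨le_refl _, hab i⟩⟩

/-- Two sets are independent if no axis hyperplane meets both. -/
private def IndepP {d : ℕ} (B C : Set (Fin d → ℝ)) : Prop :=
  ∀ H : Set (Fin d → ℝ), IsAxisHyperplane H → ¬ ((H ∩ B).Nonempty ∧ (H ∩ C).Nonempty)

/-- Splitting lemma: if every `C` in a non-pierceable family `Yj` "fails" at coordinate `j`
(both one-sided parts of `X` relative to `C` are non-pierceable), then `X` can be split at
some threshold `t` into two non-pierceable parts in coordinate `j`. -/
private lemma split_lemma {d : ℕ} (A Bb : Set (Fin d → ℝ) → Fin d → ℝ)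
    {Ok : Set (Fin d → ℝ) → Prop}
    (hOk : ∀ B, Ok B → (∀ i, A B i ≤ Bb B i) ∧
      B = {x | ∀ i, x i ∈ Set.Icc (A B i) (Bb B i)})
    (j : Fin d) (X Yj : Set (Set (Fin d → ℝ)))
    (hYOk : ∀ C ∈ Yj, Ok C)
    (hY : ¬ PiercedByHyperplanes Yj)
    (hfail : ∀ C ∈ Yj, ¬ PiercedByHyperplanes {B ∈ X | Bb B j < Bb C j} ∧
             ¬ PiercedByHyperplanes {B ∈ X | A C j < A B j}) :
    ∃ t : ℝ, ¬ PiercedByHyperplanes {B ∈ X | Bb B j < t} ∧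
             ¬ PiercedByHyperplanes {B ∈ X | t < A B j} := by
  by_contra hno
  have htot : ∀ t : ℝ, PiercedByHyperplanes {B ∈ X | Bb B j < t} ∨
      PiercedByHyperplanes {B ∈ X | t < A B j} := by
    intro t
    by_contra h
    push_neg at h
    exact hno ⟨t, h.1, h.2⟩
  obtain ⟨C0, hC0⟩ := nonempty_of_not_pbh hY
  have hmemS : ∀ C ∈ Yj, PiercedByHyperplanes {B ∈ X | Bb B j < A C j} := by
    intro C hC
    rcases htot (A C j) with h | h
    · exact h
    · exact absurd h (hfail C hC).2
  have hub : ∀ C ∈ Yj, ∀ t ∈ {t : ℝ | PiercedByHyperplanes {B ∈ X | Bb B j < t}},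
      t ≤ Bb C j := by
    intro C hC t ht
    by_contra hlt
    push_neg at hlt
    exact (hfail C hC).1 (pbh_mono (G := {B ∈ X | Bb B j < t})
      (G' := {B ∈ X | Bb B j < Bb C j})
      (fun B hB => ⟨hB.1, lt_trans hB.2 hlt⟩) ht)
  have hSne : ({t : ℝ | PiercedByHyperplanes {B ∈ X | Bb B j < t}}).Nonempty :=
    ⟨A C0 j, hmemS C0 hC0⟩
  have hbdd : BddAbove {t : ℝ | PiercedByHyperplanes {B ∈ X | Bb B j < t}} :=
    ⟨Bb C0 j, fun t ht => hub C0 hC0 t ht⟩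
  set s : ℝ := sSup {t : ℝ | PiercedByHyperplanes {B ∈ X | Bb B j < t}} with hs
  have hkey : ∀ C ∈ Yj, A C j ≤ s ∧ s ≤ Bb C j := by
    intro C hC
    exact ⟨le_csSup hbdd (hmemS C hC), csSup_le hSne (hub C hC)⟩
  have hhyp : IsAxisHyperplane {x : Fin d → ℝ | x j = s} := ⟨j, s, rfl⟩
  refine hY (pbh_mono ?_ (pbh_single hhyp))
  intro C hC
  obtain ⟨habC, heqC⟩ := hOk C (hYOk C hC)
  exact (box_meets habC heqC j s).mpr (hkey C hC)

/-- Main bipartite lemma, by induction on the number of "coupled" coordinates `J`: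
if `X`, `Y` are non-pierceable families of boxes which are coordinatewise disjoint outside `J`,
then some `C ∈ Y` has a non-pierceable fully-independent part inside `X`. -/
private lemma blem {d : ℕ} (A Bb : Set (Fin d → ℝ) → Fin d → ℝ)
    {Ok : Set (Fin d → ℝ) → Prop}
    (hOk : ∀ B, Ok B → (∀ i, A B i ≤ Bb B i) ∧
      B = {x | ∀ i, x i ∈ Set.Icc (A B i) (Bb B i)}) :
    ∀ (n : ℕ) (J : Finset (Fin d)), J.card = n →
    ∀ (X Y : Set (Set (Fin d → ℝ))),
      (∀ B ∈ X, Ok B) → (∀ C ∈ Y, Ok C) →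
      ¬ PiercedByHyperplanes X → ¬ PiercedByHyperplanes Y →
      (∀ B ∈ X, ∀ C ∈ Y, ∀ j : Fin d, j ∉ J → (Bb B j < A C j ∨ Bb C j < A B j)) →
      ∃ C ∈ Y, ¬ PiercedByHyperplanes {B ∈ X | IndepP B C} := by
  intro n
  induction n with
  | zero =>
      intro J hJ X Y hXOk hYOk hX hY hsep
      have hJ0 : J = ∅ := Finset.card_eq_zero.mp hJ
      obtain ⟨C, hCY⟩ := nonempty_of_not_pbh hY
      refine ⟨C, hCY, fun hFP => hX (pbh_mono ?_ hFP)⟩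
      intro B hBX
      refine ⟨hBX, ?_⟩
      intro H hH hcon
      have hH' : ∃ (i : Fin d) (c : ℝ), H = {x | x i = c} := hH
      obtain ⟨i, c, rfl⟩ := hH'
      obtain ⟨⟨x, hx1, hx2⟩, ⟨y, hy1, hy2⟩⟩ := hcon
      obtain ⟨habB, heqB⟩ := hOk B (hXOk B hBX)
      obtain ⟨habC, heqC⟩ := hOk C (hYOk C hCY)
      have hx1' : x i = c := hx1
      have hy1' : y i = c := hy1
      rw [heqB] at hx2
      rw [heqC] at hy2
      have hB' := hx2 i
      rw [hx1'] at hB'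
      have hC' := hy2 i
      rw [hy1'] at hC'
      rcases hsep B hBX C hCY i (by simp [hJ0]) with h | h
      · exact absurd (lt_of_le_of_lt hB'.2 (lt_of_lt_of_le h hC'.1)) (lt_irrefl c)
      · exact absurd (lt_of_le_of_lt hC'.2 (lt_of_lt_of_le h hB'.1)) (lt_irrefl c)
  | succ n ih =>
      intro J hJ X Y hXOk hYOk hX hY hsep
      classical
      by_cases hgood : ∃ C ∈ Y, ∀ j ∈ J,
          (PiercedByHyperplanes {B ∈ X | Bb B j < Bb C j} ∨
           PiercedByHyperplanes {B ∈ X | A C j < A B j})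
      · obtain ⟨C0, hC0Y, hC0⟩ := hgood
        obtain ⟨habC, heqC⟩ := hOk C0 (hYOk C0 hC0Y)
        refine ⟨C0, hC0Y, fun hFP => hX ?_⟩
        have hDj : ∀ j ∈ J,
            PiercedByHyperplanes {B ∈ X | A B j ≤ Bb C0 j ∧ A C0 j ≤ Bb B j} := by
          intro j hj
          have hhyp1 : IsAxisHyperplane {x : Fin d → ℝ | x j = A C0 j} := ⟨j, A C0 j, rfl⟩
          have hhyp2 : IsAxisHyperplane {x : Fin d → ℝ | x j = Bb C0 j} := ⟨j, Bb C0 j, rfl⟩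
          rcases hC0 j hj with h3 | h3
          · refine pbh_mono ?_ (pbh_union (pbh_single hhyp1)
              (pbh_union (pbh_single hhyp2) h3))
            rintro B ⟨hBX, hb1, hb2⟩
            obtain ⟨habB, heqB⟩ := hOk B (hXOk B hBX)
            by_cases c1 : A B j ≤ A C0 j ∧ A C0 j ≤ Bb B j
            · exact Set.mem_union_left _ ((box_meets habB heqB j (A C0 j)).mpr c1)
            · by_cases c2 : A B j ≤ Bb C0 j ∧ Bb C0 j ≤ Bb B j
              · exact Set.mem_union_right _ (Set.mem_union_left _
                  ((box_meets habB heqB j (Bb C0 j)).mpr c2))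
              · refine Set.mem_union_right _ (Set.mem_union_right _ ⟨hBX, ?_⟩)
                rcases not_and_or.mp c2 with h | h
                · exact absurd hb1 h
                · exact not_le.mp h
          · refine pbh_mono ?_ (pbh_union (pbh_single hhyp1)
              (pbh_union (pbh_single hhyp2) h3))
            rintro B ⟨hBX, hb1, hb2⟩
            obtain ⟨habB, heqB⟩ := hOk B (hXOk B hBX)
            by_cases c1 : A B j ≤ A C0 j ∧ A C0 j ≤ Bb B j
            · exact Set.mem_union_left _ ((box_meets habB heqB j (A C0 j)).mpr c1)
            · by_cases c2 : A B j ≤ Bb C0 j ∧ Bb C0 j ≤ Bb B j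
              · exact Set.mem_union_right _ (Set.mem_union_left _
                  ((box_meets habB heqB j (Bb C0 j)).mpr c2))
              · refine Set.mem_union_right _ (Set.mem_union_right _ ⟨hBX, ?_⟩)
                rcases not_and_or.mp c1 with h | h
                · exact not_le.mp h
                · exact absurd hb2 h
        refine pbh_mono ?_ (pbh_union hFP
          (pbh_biUnion (fun j => {B ∈ X | A B j ≤ Bb C0 j ∧ A C0 j ≤ Bb B j}) J hDj))
        intro B hBX
        by_cases hBI : IndepP B C0
        · exact Set.mem_union_left _ ⟨hBX, hBI⟩
        · have hex : ∃ H, IsAxisHyperplane H ∧ (H ∩ B).Nonempty ∧ (H ∩ C0).Nonempty := by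
            by_contra hno
            exact hBI (fun H hH hcon => hno ⟨H, hH, hcon.1, hcon.2⟩)
          obtain ⟨H, hH, hne1, hne2⟩ := hex
          have hH' : ∃ (i : Fin d) (c : ℝ), H = {x | x i = c} := hH
          obtain ⟨i, c, rfl⟩ := hH'
          obtain ⟨x, hx1, hx2⟩ := hne1
          obtain ⟨y, hy1, hy2⟩ := hne2
          obtain ⟨habB, heqB⟩ := hOk B (hXOk B hBX)
          have hx1' : x i = c := hx1
          have hy1' : y i = c := hy1
          rw [heqB] at hx2
          rw [heqC] at hy2
          have hB' := hx2 i
          rw [hx1'] at hB'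
          have hC' := hy2 i
          rw [hy1'] at hC'
          have hiJ : i ∈ J := by
            by_contra hiJ
            rcases hsep B hBX C0 hC0Y i hiJ with h | h
            · exact absurd (lt_of_le_of_lt hB'.2 (lt_of_lt_of_le h hC'.1)) (lt_irrefl c)
            · exact absurd (lt_of_le_of_lt hC'.2 (lt_of_lt_of_le h hB'.1)) (lt_irrefl c)
          refine Set.mem_union_right _ ?_
          exact Set.mem_iUnion.mpr ⟨i, Set.mem_iUnion.mpr ⟨hiJ,
            ⟨hBX, le_trans hB'.1 hC'.2, le_trans hC'.1 hB'.2⟩⟩⟩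
      · push_neg at hgood
        have hex : ∃ j ∈ J, ¬ PiercedByHyperplanes
            {C ∈ Y | ¬ PiercedByHyperplanes {B ∈ X | Bb B j < Bb C j} ∧
                     ¬ PiercedByHyperplanes {B ∈ X | A C j < A B j}} := by
          by_contra hno
          push_neg at hno
          refine hY (pbh_mono ?_ (pbh_biUnion (fun j =>
            {C ∈ Y | ¬ PiercedByHyperplanes {B ∈ X | Bb B j < Bb C j} ∧
                     ¬ PiercedByHyperplanes {B ∈ X | A C j < A B j}}) J hno))
          intro C hCY
          obtain ⟨j, hjJ, hj1, hj2⟩ := hgood C hCY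
          exact Set.mem_iUnion.mpr ⟨j, Set.mem_iUnion.mpr ⟨hjJ, ⟨hCY, hj1, hj2⟩⟩⟩
        obtain ⟨j0, hj0J, hYj0⟩ := hex
        obtain ⟨t, hXL, hXR⟩ := split_lemma A Bb hOk j0 X
          {C ∈ Y | ¬ PiercedByHyperplanes {B ∈ X | Bb B j0 < Bb C j0} ∧
                   ¬ PiercedByHyperplanes {B ∈ X | A C j0 < A B j0}}
          (fun C hC => hYOk C hC.1) hYj0 (fun C hC => hC.2)
        have hypt : IsAxisHyperplane {x : Fin d → ℝ | x j0 = t} := ⟨j0, t, rfl⟩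
        have htri : ¬ PiercedByHyperplanes
            {C ∈ Y | (¬ PiercedByHyperplanes {B ∈ X | Bb B j0 < Bb C j0} ∧
                      ¬ PiercedByHyperplanes {B ∈ X | A C j0 < A B j0}) ∧ Bb C j0 < t} ∨
            ¬ PiercedByHyperplanes
            {C ∈ Y | (¬ PiercedByHyperplanes {B ∈ X | Bb B j0 < Bb C j0} ∧
                      ¬ PiercedByHyperplanes {B ∈ X | A C j0 < A B j0}) ∧ t < A C j0} := by
          by_contra h
          push_neg at h
          refine hYj0 (pbh_mono ?_ (pbh_union h.1 (pbh_union (pbh_single hypt) h.2)))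
          intro C hC
          obtain ⟨habC, heqC⟩ := hOk C (hYOk C hC.1)
          rcases lt_or_ge (Bb C j0) t with h1 | h1
          · exact Set.mem_union_left _ ⟨hC.1, hC.2, h1⟩
          · rcases lt_or_ge t (A C j0) with h2 | h2
            · exact Set.mem_union_right _ (Set.mem_union_right _ ⟨hC.1, hC.2, h2⟩)
            · exact Set.mem_union_right _ (Set.mem_union_left _
                ((box_meets habC heqC j0 t).mpr ⟨h2, h1⟩))
        have hcard : (J.erase j0).card = n := by
          rw [Finset.card_erase_of_mem hj0J, hJ]
          omega
        rcases htri with hYL | hYR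
        · -- left boxes of Y pair with right part of X
          have hsep1 : ∀ B ∈ {B ∈ X | t < A B j0},
              ∀ C ∈ {C ∈ Y | (¬ PiercedByHyperplanes {B ∈ X | Bb B j0 < Bb C j0} ∧
                      ¬ PiercedByHyperplanes {B ∈ X | A C j0 < A B j0}) ∧ Bb C j0 < t},
              ∀ j : Fin d, j ∉ J.erase j0 → (Bb B j < A C j ∨ Bb C j < A B j) := by
            intro B hB C hC j hj
            rcases eq_or_ne j j0 with rfl | hne
            · exact Or.inr (lt_trans hC.2.2 hB.2)
            · exact hsep B hB.1 C hC.1 j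
                (fun hjJ => hj (Finset.mem_erase.mpr ⟨hne, hjJ⟩))
          obtain ⟨C0, hC0, hnf⟩ := ih (J.erase j0) hcard
            {B ∈ X | t < A B j0}
            {C ∈ Y | (¬ PiercedByHyperplanes {B ∈ X | Bb B j0 < Bb C j0} ∧
                      ¬ PiercedByHyperplanes {B ∈ X | A C j0 < A B j0}) ∧ Bb C j0 < t}
            (fun B hB => hXOk B hB.1) (fun C hC => hYOk C hC.1)
            hXR hYL hsep1
          exact ⟨C0, hC0.1, fun h => hnf (pbh_mono
            (G := {B ∈ X | IndepP B C0})
            (G' := {B ∈ {B ∈ X | t < A B j0} | IndepP B C0})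
            (fun B hB => ⟨hB.1.1, hB.2⟩) h)⟩
        · -- right boxes of Y pair with left part of X
          have hsep1 : ∀ B ∈ {B ∈ X | Bb B j0 < t},
              ∀ C ∈ {C ∈ Y | (¬ PiercedByHyperplanes {B ∈ X | Bb B j0 < Bb C j0} ∧
                      ¬ PiercedByHyperplanes {B ∈ X | A C j0 < A B j0}) ∧ t < A C j0},
              ∀ j : Fin d, j ∉ J.erase j0 → (Bb B j < A C j ∨ Bb C j < A B j) := by
            intro B hB C hC j hj
            rcases eq_or_ne j j0 with rfl | hne
            · exact Or.inl (lt_trans hB.2 hC.2.2)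
            · exact hsep B hB.1 C hC.1 j
                (fun hjJ => hj (Finset.mem_erase.mpr ⟨hne, hjJ⟩))
          obtain ⟨C0, hC0, hnf⟩ := ih (J.erase j0) hcard
            {B ∈ X | Bb B j0 < t}
            {C ∈ Y | (¬ PiercedByHyperplanes {B ∈ X | Bb B j0 < Bb C j0} ∧
                      ¬ PiercedByHyperplanes {B ∈ X | A C j0 < A B j0}) ∧ t < A C j0}
            (fun B hB => hXOk B hB.1) (fun C hC => hYOk C hC.1)
            hXL hYR hsep1
          exact ⟨C0, hC0.1, fun h => hnf (pbh_mono
            (G := {B ∈ X | IndepP B C0})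
            (G' := {B ∈ {B ∈ X | Bb B j0 < t} | IndepP B C0})
            (fun B hB => ⟨hB.1.1, hB.2⟩) h)⟩

theorem stmt6 (d : ℕ) (F : Set (Set (Fin d → ℝ))) (hF : F.Infinite)
    (hbox : ∀ B ∈ F, IsBox B)
    (hnp : ¬ PiercedByHyperplanes F) :
    ∃ B : ℕ → Set (Fin d → ℝ), (∀ n, B n ∈ F) ∧ Function.Injective B ∧
      ∀ i j : ℕ, i ≠ j → ∀ H, IsAxisHyperplane H →
        ¬ ((H ∩ B i).Nonempty ∧ (H ∩ B j).Nonempty) := by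
  classical
  rcases Nat.eq_zero_or_pos d with hd0 | hd
  · subst hd0
    exfalso
    have hsub : F ⊆ {∅, Set.univ} := by
      intro X _
      rcases Set.eq_empty_or_nonempty X with rfl | ⟨x, hx⟩
      · exact Set.mem_insert _ _
      · have hXu : X = Set.univ := by
          ext y
          simp only [Set.mem_univ, iff_true]
          have hyx : y = x := Subsingleton.elim y x
          rw [hyx]
          exact hx
        rw [hXu]
        exact Set.mem_insert_of_mem _ rfl
    exact hF (Set.Finite.subset (Set.Finite.insert _ (Set.finite_singleton _)) hsub)
  · have hbox' : ∀ B ∈ F, ∃ a b : Fin d → ℝ,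
        (∀ i, a i ≤ b i) ∧ B = {x | ∀ i, x i ∈ Set.Icc (a i) (b i)} := hbox
    choose! A Bb h1 h2 using hbox'
    have hOk : ∀ B, B ∈ F → (∀ i, A B i ≤ Bb B i) ∧
        B = {x | ∀ i, x i ∈ Set.Icc (A B i) (Bb B i)} := fun B hB => ⟨h1 B hB, h2 B hB⟩
    have lemA : ∀ G : Set (Set (Fin d → ℝ)), (∀ B ∈ G, B ∈ F) →
        ¬ PiercedByHyperplanes G →
        ∃ C ∈ G, ¬ PiercedByHyperplanes {B ∈ G | IndepP B C} := by
      intro G hG hnG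
      exact blem A Bb hOk Finset.univ.card Finset.univ rfl G G hG hG hnG hnG
        (fun B _ C _ j hj => absurd (Finset.mem_univ j) hj)
    choose! pick hpmem hpnf using lemA
    let chain : ℕ → Set (Set (Fin d → ℝ)) :=
      fun n => Nat.rec (motive := fun _ => Set (Set (Fin d → ℝ))) F
        (fun _ G => {B ∈ G | IndepP B (pick G)}) n
    have chain_succ : ∀ n, chain (n + 1) = {B ∈ chain n | IndepP B (pick (chain n))} :=
      fun n => rfl
    have hGood : ∀ n, (∀ B ∈ chain n, B ∈ F) ∧ ¬ PiercedByHyperplanes (chain n) := by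
      intro n
      induction n with
      | zero => exact ⟨fun B hB => hB, hnp⟩
      | succ n ihn =>
          constructor
          · rw [chain_succ]
            intro B hB
            exact ihn.1 B hB.1
          · rw [chain_succ]
            exact hpnf (chain n) ihn.1 ihn.2
    let C : ℕ → Set (Fin d → ℝ) := fun n => pick (chain n)
    have hCmem : ∀ n, C n ∈ chain n := fun n => hpmem (chain n) (hGood n).1 (hGood n).2
    have hCF : ∀ n, C n ∈ F := fun n => (hGood n).1 _ (hCmem n)
    have chain_mono : ∀ n, chain (n + 1) ⊆ chain n := by
      intro n B hB
      rw [chain_succ] at hB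
      exact hB.1
    have chain_le : ∀ m n, m ≤ n → chain n ⊆ chain m := by
      intro m n h
      induction h with
      | refl => exact subset_rfl
      | @step k hk ihk => exact fun B hB => ihk (chain_mono k hB)
    have hIndep : ∀ m n, m < n → IndepP (C n) (C m) := by
      intro m n h
      have h1 : C n ∈ chain (m + 1) := chain_le (m + 1) n h (hCmem n)
      rw [chain_succ] at h1
      exact h1.2
    have hne : ∀ n, (C n).Nonempty := fun n =>
      box_nonempty (hOk (C n) (hCF n)).1 (hOk (C n) (hCF n)).2
    have hinj : Function.Injective C := by
      intro a b hab
      by_contra hne'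
      rcases lt_or_gt_of_ne hne' with h | h
      · obtain ⟨x, hx⟩ := hne b
        exact hIndep a b h {y | y ⟨0, hd⟩ = x ⟨0, hd⟩} ⟨⟨0, hd⟩, x ⟨0, hd⟩, rfl⟩
          ⟨⟨x, rfl, hx⟩, ⟨x, rfl, by rw [hab]; exact hx⟩⟩
      · obtain ⟨x, hx⟩ := hne a
        exact hIndep b a h {y | y ⟨0, hd⟩ = x ⟨0, hd⟩} ⟨⟨0, hd⟩, x ⟨0, hd⟩, rfl⟩
          ⟨⟨x, rfl, hx⟩, ⟨x, rfl, by rw [← hab]; exact hx⟩⟩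
    refine ⟨C, hCF, hinj, ?_⟩
    intro i j hij H hH hcon
    rcases lt_or_gt_of_ne hij with h | h
    · exact hIndep i j h H hH ⟨hcon.2, hcon.1⟩
    · exact hIndep j i h H hH hcon
end

section
/- Let 0 ≤ k < d and let F be an infinite collection of axis-parallel boxes in ℝ^d that cannot be pierced by any finite collection of axis-parallel k-flats. Then F contains an infinite sequence {B_n} of boxes such that no axis-parallel k-flat intersects two distinct boxes of the sequence. -/
open Set

/-!
A family of boxes is *big* if it cannot be pierced by finitely many `m`-flats. Pierceable
families form an ideal, so the big families are those met frequently by the filter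
`piercingFilter d m` of families with pierceable complement. Choose
`m ≥ k` such that `F` is big but pierceable by `(m+1)`-flats; then some `(m+1)`-flat
`{p | ∀ i ∈ I, p i = c i}` meets a big subfamily. For a free coordinate `j ∉ I`, the boxes of
that subfamily whose `j`-th interval contains a given value all meet one `m`-flat, so they are
negligible. It suffices to find boxes whose intervals are pairwise disjoint in every free
coordinate, because every `m`-flat fixes some free coordinate.

Such a sequence exists for every filter in which each value of each coordinate is hit only by a
negligible set of boxes. The proof is by induction on the number of coordinates. If no box were
separated from a big family, refine the filter until strict nesting is negligible, one
coordinate `j` at a time. Once that holds in every coordinate, almost every box is separated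
from almost every other, a contradiction. To make nesting at `j` negligible, follow a chain of
boxes nested at `j` in which each link has almost minimal `j`-width among the boxes that have a
big family nested inside them. The `j`-intervals of the chain shrink to some `[α, β]`. If
`α < β`, every such box deep in the chain contains the midpoint, which is negligible. If
`α = β`, the boxes avoiding `α` are eventually separated at `j` from the tail of the chain, and
the induction hypothesis separates them in the remaining coordinates.
-/

open Filter Topology

theorem Filter.Frequently.filter_mono₂ {α : Type*} {f g : Filter α} {p : α → α → Prop}
    (h : ∃ᶠ x in f, ∃ᶠ y in f, p x y) (hfg : f ≤ g) : ∃ᶠ x in g, ∃ᶠ y in g, p x y :=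
  (h.mono fun _ hx => hx.filter_mono hfg).filter_mono hfg

theorem Filter.exists_le_forall_of_dense {α β : Type*} {l : Filter α} [l.NeBot] (s : Finset β)
    {P : β → Filter α → Prop} (hanti : ∀ j g g', g' ≤ g → P j g → P j g')
    (hdense : ∀ j ∈ s, ∀ g ≤ l, g.NeBot → ∃ g' ≤ g, g'.NeBot ∧ P j g') :
    ∃ g ≤ l, g.NeBot ∧ ∀ j ∈ s, P j g := by
  classical
  induction s using Finset.induction_on with
  | empty => exact ⟨l, le_rfl, ‹_›, by simp⟩
  | insert a s _ ih =>
    obtain ⟨g, hgl, hg, hs⟩ := ih fun j hj => hdense j (Finset.mem_insert_of_mem hj)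
    obtain ⟨g', hg'g, hg', ha⟩ := hdense a (Finset.mem_insert_self a s) g hgl hg
    refine ⟨g', hg'g.trans hgl, hg', fun j hj => ?_⟩
    rcases Finset.mem_insert.1 hj with rfl | hj
    · exact ha
    · exact hanti j g g' hg'g (hs j hj)

theorem Filter.exists_seq_of_frequently_frequently {ι : Type*} {l : Filter ι} [l.NeBot]
    {R : ι → ι → Prop} (h : ∀ g ≤ l, g.NeBot → ∃ᶠ x in g, ∃ᶠ y in g, R x y) :
    ∃ x : ℕ → ι, ∀ m n, m < n → R (x m) (x n) := by
  have hstep : ∀ Y : Set ι, (l ⊓ 𝓟 Y).NeBot → ∃ x ∈ Y, (l ⊓ 𝓟 (Y ∩ {y | R x y})).NeBot := by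
    intro Y hY
    obtain ⟨x, hx, hxY⟩ :=
      ((h _ inf_le_left hY).and_eventually (mem_inf_of_right (mem_principal_self Y))).exists
    refine ⟨x, hxY, ?_⟩
    rw [← inf_principal, ← inf_assoc]
    exact frequently_iff_neBot.1 hx
  have : Nonempty ι := nonempty_of_neBot l
  choose! next hnextY hnextNeBot using hstep
  let Y : ℕ → Set ι := fun n => Nat.rec univ (fun _ Y => Y ∩ {y | R (next Y) y}) n
  have hY : ∀ n, (l ⊓ 𝓟 (Y n)).NeBot :=
    Nat.rec (by simpa [Y] using ‹l.NeBot›) fun n ih => hnextNeBot _ ih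
  have hYanti : Antitone Y := antitone_nat_of_succ_le fun n => inter_subset_left
  exact ⟨fun n => next (Y n), fun m n hmn => (hYanti hmn (hnextY _ (hY n))).2⟩

theorem exists_limits_of_strictMono_of_strictAnti {a b : ℕ → ℝ} (ha : StrictMono a)
    (hb : StrictAnti b) (hab : ∀ n, a n ≤ b n) :
    ∃ α β, α ≤ β ∧ (∀ n, a n < α) ∧ (∀ n, β < b n) ∧
      Tendsto a atTop (𝓝 α) ∧ Tendsto b atTop (𝓝 β) := by
  have hle : ∀ m n, a m ≤ b n := fun m n =>
    (ha.monotone (le_max_left m n)).trans ((hab _).trans (hb.antitone (le_max_right m n)))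
  have hbdd : BddAbove (range a) := ⟨b 0, forall_mem_range.2 fun n => hle n 0⟩
  have hbdd' : BddBelow (range b) := ⟨a 0, forall_mem_range.2 fun n => hle 0 n⟩
  refine ⟨⨆ n, a n, ⨅ n, b n, ciSup_le fun m => le_ciInf fun n => hle m n,
    fun n => (ha n.lt_succ_self).trans_le (le_ciSup hbdd _),
    fun n => (ciInf_le hbdd' _).trans_lt (hb n.lt_succ_self),
    tendsto_atTop_ciSup ha.monotone hbdd, tendsto_atTop_ciInf hb.antitone hbdd'⟩

namespace BoxFamily

variable {ι κ : Type*}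

def SeparatedOn (lo hi : ι → κ → ℝ) (s : Finset κ) (x y : ι) : Prop :=
  ∀ j ∈ s, hi x j < lo y j ∨ hi y j < lo x j

def NestedAt (lo hi : ι → κ → ℝ) (j : κ) (x y : ι) : Prop :=
  lo x j < lo y j ∧ hi y j < hi x j

def PointsNegligible (lo hi : ι → κ → ℝ) (s : Finset κ) (l : Filter ι) : Prop :=
  ∀ j ∈ s, ∀ c, ∀ᶠ x in l, c ∉ Icc (lo x j) (hi x j)

variable {lo hi : ι → κ → ℝ} {s : Finset κ} {j : κ} {l g : Filter ι}

theorem SeparatedOn.symm {x y : ι} (h : SeparatedOn lo hi s x y) : SeparatedOn lo hi s y x :=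
  fun j hj => (h j hj).symm

theorem NestedAt.trans {x y z : ι} (hxy : NestedAt lo hi j x y) (hyz : NestedAt lo hi j y z) :
    NestedAt lo hi j x z :=
  ⟨hxy.1.trans hyz.1, hyz.2.trans hxy.2⟩

theorem PointsNegligible.mono (h : PointsNegligible lo hi s l) (hgl : g ≤ l) {t : Finset κ}
    (hts : t ⊆ s) : PointsNegligible lo hi t g :=
  fun j hj c => (h j (hts hj) c).filter_mono hgl

theorem frequently_frequently_separatedOn_of_not_nestedAt [l.NeBot]
    (hpts : PointsNegligible lo hi s l)
    (hnest : ∀ j ∈ s, ¬ ∃ᶠ x in l, ∃ᶠ y in l, NestedAt lo hi j x y) :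
    ∃ᶠ x in l, ∃ᶠ y in l, SeparatedOn lo hi s x y := by
  simp only [not_frequently] at hnest
  suffices h : ∀ᶠ x in l, ∀ᶠ y in l, SeparatedOn lo hi s x y from
    (h.mono fun _ hx => hx.frequently).frequently
  filter_upwards [(eventually_all_finset s).2 hnest] with x hx
  have hcorners : ∀ᶠ y in l, ∀ j ∈ s,
      lo x j ∉ Icc (lo y j) (hi y j) ∧ hi x j ∉ Icc (lo y j) (hi y j) :=
    (eventually_all_finset s).2 fun j hj => (hpts j hj _).and (hpts j hj _)
  filter_upwards [hcorners, (eventually_all_finset s).2 hx] with y hy hxy j hj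
  have hcorner := hy j hj
  have hnest := hxy j hj
  simp only [NestedAt, mem_Icc, not_and_or, not_le] at hcorner hnest
  -- an interval containing neither endpoint of another, and not strictly inside it, misses it
  grind

theorem exists_nestedAt_chain (hle : ∀ x, lo x j ≤ hi x j) {P : Set ι} (hP : P.Nonempty)
    (hsucc : ∀ x ∈ P, ∃ y ∈ P, NestedAt lo hi j x y) :
    ∃ x : ℕ → ι, (∀ n, x n ∈ P) ∧ (∀ n, NestedAt lo hi j (x n) (x (n + 1))) ∧
      ∀ n, ∀ y ∈ P, NestedAt lo hi j (x n) y →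
        hi (x (n + 1)) j - lo (x (n + 1)) j < hi y j - lo y j + 1 / (n + 1) := by
  have hnext : ∀ x ∈ P, ∀ n : ℕ, ∃ y ∈ P, NestedAt lo hi j x y ∧ ∀ z ∈ P, NestedAt lo hi j x z →
      hi y j - lo y j < hi z j - lo z j + 1 / (n + 1) := by
    intro x hx n
    have hne : {z | z ∈ P ∧ NestedAt lo hi j x z}.Nonempty := hsucc x hx
    obtain ⟨_, ⟨y, hy, rfl⟩, hlt⟩ :=
      Real.lt_sInf_add_pos (hne.image fun z => hi z j - lo z j) (Nat.one_div_pos_of_nat (n := n))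
    refine ⟨y, hy.1, hy.2, fun z hzP hz => hlt.trans_le ?_⟩
    gcongr
    refine csInf_le ⟨0, ?_⟩ ⟨z, ⟨hzP, hz⟩, rfl⟩
    rintro _ ⟨w, -, rfl⟩
    exact sub_nonneg.2 (hle w)
  choose! next hnextP hnextNested hnextMin using hnext
  obtain ⟨x₀, hx₀⟩ := hP
  let x : ℕ → ι := fun n => Nat.rec x₀ (fun n y => next y n) n
  have hxP : ∀ n, x n ∈ P := fun n => Nat.rec hx₀ (fun n ih => hnextP _ ih n) n
  exact ⟨x, hxP, fun n => hnextNested _ (hxP n) n, fun n => hnextMin _ (hxP n) n⟩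

theorem exists_mem_Icc_of_nestedAt_chain {P : Set ι} {x : ℕ → ι}
    (hmin : ∀ n, ∀ y ∈ P, NestedAt lo hi j (x n) y →
      hi (x (n + 1)) j - lo (x (n + 1)) j < hi y j - lo y j + 1 / (n + 1))
    {α β : ℝ} (hαβ : α < β) (hα : ∀ n, lo (x n) j < α) (hβ : ∀ n, β < hi (x n) j)
    (hlo : Tendsto (fun n => lo (x n) j) atTop (𝓝 α))
    (hhi : Tendsto (fun n => hi (x n) j) atTop (𝓝 β)) :
    ∃ N, ∀ y ∈ P, NestedAt lo hi j (x N) y → (α + β) / 2 ∈ Icc (lo y j) (hi y j) := by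
  have hε : 0 < (β - α) / 4 := by linarith
  obtain ⟨N, hloN, hhiN, hN⟩ := ((hlo.eventually_const_lt (sub_lt_self α hε)).and
    ((hhi.eventually_lt_const (lt_add_of_pos_right β hε)).and
      (tendsto_one_div_add_atTop_nhds_zero_nat.eventually_lt_const hε))).exists
  refine ⟨N, fun y hyP hy => ?_⟩
  constructor <;> linarith [hmin N y hyP hy, hα (N + 1), hβ (N + 1), hy.1, hy.2]

theorem frequently_frequently_separatedOn_of_shrinking [DecidableEq κ]
    (hpts : PointsNegligible lo hi s l) (hj : j ∈ s)
    (ih : ∀ g : Filter ι, g.NeBot → PointsNegligible lo hi (s.erase j) g →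
      ∃ᶠ x in g, ∃ᶠ y in g, SeparatedOn lo hi (s.erase j) x y)
    {x : ℕ → ι} (hx : ∀ n, NestedAt lo hi j (x n) (x (n + 1)))
    (hne : ∀ n, (l ⊓ 𝓟 {y | NestedAt lo hi j (x n) y}).NeBot) {α : ℝ}
    (hlo : Tendsto (fun n => lo (x n) j) atTop (𝓝 α))
    (hhi : Tendsto (fun n => hi (x n) j) atTop (𝓝 α)) :
    ∃ g ≤ l, g.NeBot ∧ ∃ᶠ y in g, ∃ᶠ z in g, SeparatedOn lo hi s y z := by
  set S : ℕ → Set ι := fun n => {y | NestedAt lo hi j (x n) y}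
  have hS : Antitone S := antitone_nat_of_succ_le fun n y hy => (hx n).trans hy
  set g := ⨅ n, l ⊓ 𝓟 (S n)
  have hgl : g ≤ l := (iInf_le _ 0).trans inf_le_left
  have hg : g.NeBot := iInf_neBot_of_directed'
    (Antitone.directed_ge fun _ _ h => inf_le_inf_left _ (principal_mono.2 (hS h))) hne
  have hSg : ∀ n, S n ∈ g := fun n => mem_iInf_of_mem n (mem_inf_of_right (mem_principal_self _))
  have hsepj : ∀ᶠ y in g, ∀ᶠ z in g, hi y j < lo z j ∨ hi z j < lo y j := by
    filter_upwards [(hpts j hj α).filter_mono hgl] with y hy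
    rw [mem_Icc, not_and_or, not_le, not_le] at hy
    rcases hy with hy | hy
    · obtain ⟨N, hN⟩ := (hhi.eventually_lt_const hy).exists
      filter_upwards [hSg N] with z hz using Or.inr (hz.2.trans hN)
    · obtain ⟨N, hN⟩ := (hlo.eventually_const_lt hy).exists
      filter_upwards [hSg N] with z hz using Or.inl (hN.trans hz.1)
  refine ⟨g, hgl, hg, ((ih g hg (hpts.mono hgl (s.erase_subset j))).and_eventually hsepj).mono
    fun y ⟨hy, hyj⟩ => (hy.and_eventually hyj).mono fun z ⟨hz, hzj⟩ i hi => ?_⟩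
  rcases eq_or_ne i j with rfl | hij
  · exact hzj
  · exact hz i (Finset.mem_erase.2 ⟨hij, hi⟩)

theorem exists_le_not_frequently_nestedAt [DecidableEq κ] (hle : ∀ x j, lo x j ≤ hi x j)
    [l.NeBot] (hpts : PointsNegligible lo hi s l)
    (hent : ¬ ∃ᶠ x in l, ∃ᶠ y in l, SeparatedOn lo hi s x y) (hj : j ∈ s)
    (ih : ∀ g : Filter ι, g.NeBot → PointsNegligible lo hi (s.erase j) g →
      ∃ᶠ x in g, ∃ᶠ y in g, SeparatedOn lo hi (s.erase j) x y) :
    ∃ g ≤ l, g.NeBot ∧ ¬ ∃ᶠ x in g, ∃ᶠ y in g, NestedAt lo hi j x y := by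
  by_contra! hnd
  set P := {x | ∃ᶠ y in l, NestedAt lo hi j x y}
  have hP : ∀ S : Set ι, (l ⊓ 𝓟 S).NeBot → ∃ᶠ x in l ⊓ 𝓟 S, x ∈ P := fun S hS =>
    (hnd _ inf_le_left hS).mono fun x hx => hx.filter_mono inf_le_left
  have hS : ∀ S : Set ι, ∀ᶠ y in l ⊓ 𝓟 S, y ∈ S :=
    fun S => mem_inf_of_right (mem_principal_self S)
  have hPne : ∀ x ∈ P, (l ⊓ 𝓟 {y | NestedAt lo hi j x y}).NeBot :=
    fun x hx => frequently_iff_neBot.1 hx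
  obtain ⟨x, hxP, hx, hmin⟩ := exists_nestedAt_chain (hle · j)
    (hP univ (by simpa)).exists
    fun x hx => ((hP _ (hPne x hx)).and_eventually (hS _)).exists
  obtain ⟨α, β, hαβ, hα, hβ, hlo, hhi⟩ := exists_limits_of_strictMono_of_strictAnti
    (strictMono_nat_of_lt_succ fun n => (hx n).1) (strictAnti_nat_of_succ_lt fun n => (hx n).2)
    fun n => hle (x n) j
  rcases hαβ.lt_or_eq with hαβ | rfl
  · obtain ⟨N, hN⟩ := exists_mem_Icc_of_nestedAt_chain hmin hαβ hα hβ hlo hhi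
    obtain ⟨y, hyP, hyN, hy⟩ := ((hP _ (hPne _ (hxP N))).and_eventually
      ((hS _).and ((hpts j hj ((α + β) / 2)).filter_mono inf_le_left))).exists
    exact hy (hN y hyP hyN)
  · obtain ⟨g, hgl, -, hsep⟩ := frequently_frequently_separatedOn_of_shrinking hpts hj ih hx
      (fun n => hPne _ (hxP n)) hlo hhi
    exact hent (hsep.filter_mono₂ hgl)

theorem frequently_frequently_separatedOn (hle : ∀ x j, lo x j ≤ hi x j) (s : Finset κ)
    {l : Filter ι} [l.NeBot] (hpts : PointsNegligible lo hi s l) :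
    ∃ᶠ x in l, ∃ᶠ y in l, SeparatedOn lo hi s x y := by
  classical
  induction s using Finset.strongInduction generalizing l with
  | H s ih =>
    by_contra hent
    obtain ⟨g, hgl, hg, hnest⟩ := exists_le_forall_of_dense s
      (P := fun j g => ¬ ∃ᶠ x in g, ∃ᶠ y in g, NestedAt lo hi j x y)
      (fun j g g' hg'g hP hP' => hP (hP'.filter_mono₂ hg'g))
      fun j hj g hgl hg => exists_le_not_frequently_nestedAt hle (hpts.mono hgl subset_rfl)
        (fun h => hent (h.filter_mono₂ hgl)) hj fun g' hg' => ih _ (Finset.erase_ssubset hj)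
    exact hent ((frequently_frequently_separatedOn_of_not_nestedAt
      (hpts.mono hgl subset_rfl) hnest).filter_mono₂ hgl)

theorem exists_seq_separatedOn (hle : ∀ x j, lo x j ≤ hi x j) (s : Finset κ) [l.NeBot]
    (hpts : PointsNegligible lo hi s l) :
    ∃ x : ℕ → ι, ∀ m n, m < n → SeparatedOn lo hi s (x m) (x n) :=
  exists_seq_of_frequently_frequently fun _ hgl _ =>
    frequently_frequently_separatedOn hle s (hpts.mono hgl subset_rfl)

end BoxFamily

section Piercing

variable {d k m : ℕ} {F G : Set (Set (Fin d → ℝ))}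

theorem PiercedByFlats.mono (hG : PiercedByFlats k G) (hFG : F ⊆ G) : PiercedByFlats k F :=
  let ⟨K, hK, hcover⟩ := hG
  ⟨K, hK, fun B hB => hcover B (hFG hB)⟩

theorem PiercedByFlats.union (hF : PiercedByFlats k F) (hG : PiercedByFlats k G) :
    PiercedByFlats k (F ∪ G) := by
  classical
  obtain ⟨K, hK, hFK⟩ := hF
  obtain ⟨L, hL, hGL⟩ := hG
  refine ⟨K ∪ L, fun f hf => (Finset.mem_union.1 hf).elim (hK f) (hL f), ?_⟩
  rintro B (hB | hB)
  · obtain ⟨f, hf, hBf⟩ := hFK B hB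
    exact ⟨f, Finset.mem_union_left L hf, hBf⟩
  · obtain ⟨f, hf, hBf⟩ := hGL B hB
    exact ⟨f, Finset.mem_union_right K hf, hBf⟩

theorem piercedByFlats_empty : PiercedByFlats k (∅ : Set (Set (Fin d → ℝ))) :=
  ⟨∅, by simp, by simp⟩

theorem piercedByFlats_of_le (hdk : d ≤ k) (hF : ∀ B ∈ F, B.Nonempty) : PiercedByFlats k F := by
  refine ⟨{univ}, ?_, fun B hB => ⟨univ, Finset.mem_singleton_self _, by simpa using hF B hB⟩⟩
  rintro f hf
  rw [Finset.mem_singleton.1 hf]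
  exact ⟨∅, 0, by rw [Finset.card_empty, Nat.sub_eq_zero_of_le hdk], by simp⟩

theorem IsBox.nonempty {B : Set (Fin d → ℝ)} (hB : IsBox B) : B.Nonempty := by
  obtain ⟨a, b, hab, rfl⟩ := hB
  exact ⟨a, fun i => ⟨le_rfl, hab i⟩⟩

theorem IsAxisFlat.exists_superset {K : Set (Fin d → ℝ)} (hK : IsAxisFlat k K) (hkm : k ≤ m) :
    ∃ K', IsAxisFlat m K' ∧ K ⊆ K' := by
  obtain ⟨I, c, hI, rfl⟩ := hK
  obtain ⟨J, hJI, hJ⟩ := Finset.exists_subset_card_eq (show d - m ≤ I.card by omega)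
  exact ⟨_, ⟨J, c, hJ, rfl⟩, fun x hx i hi => hx i (hJI hi)⟩

theorem exists_isAxisFlat_mem (m : ℕ) (p : Fin d → ℝ) : ∃ K, IsAxisFlat m K ∧ p ∈ K :=
  let ⟨K, hK, hpK⟩ := IsAxisFlat.exists_superset (k := 0) ⟨Finset.univ, p, by simp, rfl⟩
    (Nat.zero_le m)
  ⟨K, hK, hpK fun _ _ => rfl⟩

theorem exists_not_piercedByFlats_and_succ (hbox : ∀ B ∈ F, IsBox B)
    (hnp : ¬ PiercedByFlats k F) :
    ∃ m, k ≤ m ∧ m < d ∧ ¬ PiercedByFlats m F ∧ PiercedByFlats (m + 1) F := by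
  have htop : ∀ m, d ≤ m → PiercedByFlats m F :=
    fun m hm => piercedByFlats_of_le hm fun B hB => (hbox B hB).nonempty
  obtain ⟨n, hn, hn1⟩ := Nat.exists_not_and_succ_of_not_zero_of_exists
    (p := fun n => PiercedByFlats (k + n) F) hnp ⟨d, htop _ (by omega)⟩
  exact ⟨k + n, by omega, lt_of_not_ge fun h => hn (htop _ h), hn, hn1⟩

variable (d k) in
def piercingFilter : Filter (Set (Fin d → ℝ)) :=
  Filter.comk (PiercedByFlats k) piercedByFlats_empty (fun _ ht _ hst => ht.mono hst)
    fun _ hs _ ht => hs.union ht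

theorem frequently_piercingFilter_iff :
    (∃ᶠ B in piercingFilter d k, B ∈ F) ↔ ¬ PiercedByFlats k F := by
  change ¬ PiercedByFlats k {B | B ∉ F}ᶜ ↔ _
  simp only [compl_ofPred, not_not, ofPred_mem_eq]

theorem eventually_piercingFilter_not_meets {K : Set (Fin d → ℝ)} (hK : IsAxisFlat k K) :
    ∀ᶠ B in piercingFilter d k, ¬ (B ∩ K).Nonempty := by
  change PiercedByFlats k {B | ¬ (B ∩ K).Nonempty}ᶜ
  simp only [compl_ofPred, not_not]
  exact ⟨{K}, by simpa using hK, fun B hB => ⟨K, Finset.mem_singleton_self K, hB⟩⟩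

theorem exists_flat_frequently_meets {l : Filter (Set (Fin d → ℝ))} (hF : PiercedByFlats k F)
    (hl : ∃ᶠ B in l, B ∈ F) : ∃ f, IsAxisFlat k f ∧ ∃ᶠ B in l, B ∈ F ∧ (B ∩ f).Nonempty := by
  obtain ⟨K, hK, hcover⟩ := hF
  have : ∃ᶠ B in l, ∃ f ∈ K, B ∈ F ∧ (B ∩ f).Nonempty :=
    hl.mono fun B hB => let ⟨f, hf, hBf⟩ := hcover B hB; ⟨f, hf, hB, hBf⟩
  obtain ⟨f, hf, hfreq⟩ := K.frequently_exists.1 this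
  exact ⟨f, hK f hf, hfreq⟩

end Piercing

section Boxes

open BoxFamily

variable {d k m : ℕ}

def NoCommonFlat (k : ℕ) (U V : Set (Fin d → ℝ)) : Prop :=
  ∀ K, IsAxisFlat k K → ¬ ((K ∩ U).Nonempty ∧ (K ∩ V).Nonempty)

theorem NoCommonFlat.of_le {U V : Set (Fin d → ℝ)} (h : NoCommonFlat m U V) (hkm : k ≤ m) :
    NoCommonFlat k U V := fun _ hK hUV =>
  let ⟨K', hK', hKK'⟩ := hK.exists_superset hkm
  h K' hK'
    ⟨hUV.1.mono (inter_subset_inter_left _ hKK'), hUV.2.mono (inter_subset_inter_left _ hKK')⟩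

theorem NoCommonFlat.ne {U V : Set (Fin d → ℝ)} (h : NoCommonFlat k U V) (hU : U.Nonempty) :
    U ≠ V := by
  rintro rfl
  obtain ⟨p, hp⟩ := hU
  obtain ⟨K, hK, hpK⟩ := exists_isAxisFlat_mem k p
  exact h K hK ⟨⟨p, hpK, hp⟩, ⟨p, hpK, hp⟩⟩

variable {ι : Type*} {B : ι → Set (Fin d → ℝ)} {a b : ι → Fin d → ℝ}

theorem pointsNegligible_of_eventually_meets_flat
    (hB : ∀ x, B x = {p | ∀ i, p i ∈ Icc (a x i) (b x i)}) {l : Filter ι}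
    (hl : ∀ K, IsAxisFlat m K → ∀ᶠ x in l, ¬ (B x ∩ K).Nonempty)
    {I : Finset (Fin d)} (hI : I.card + 1 = d - m) {c : Fin d → ℝ}
    (hmeet : ∀ᶠ x in l, (B x ∩ {p | ∀ i ∈ I, p i = c i}).Nonempty) :
    PointsNegligible a b Iᶜ l := by
  intro j hj t
  have hjI : j ∉ I := Finset.mem_compl.1 hj
  have hK : IsAxisFlat m {p : Fin d → ℝ | ∀ i ∈ insert j I, p i = Function.update c j t i} :=
    ⟨_, _, by rw [Finset.card_insert_of_notMem hjI, hI], rfl⟩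
  filter_upwards [hl _ hK, hmeet] with x hxK ⟨p, hpB, hpI⟩ ht
  refine hxK ⟨Function.update p j t, ?_, fun i hi => ?_⟩
  · rw [hB] at hpB ⊢
    intro i
    rcases eq_or_ne i j with rfl | hij
    · simpa using ht
    · simpa [hij] using hpB i
  · rcases eq_or_ne i j with rfl | hij
    · simp
    · simp [hij, hpI i (Finset.mem_of_mem_insert_of_ne hi hij)]

theorem noCommonFlat_of_separatedOn (hB : ∀ x, B x = {p | ∀ i, p i ∈ Icc (a x i) (b x i)})
    {I : Finset (Fin d)} (hI : I.card < d - m) {x y : ι} (hxy : SeparatedOn a b Iᶜ x y) :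
    NoCommonFlat m (B x) (B y) := by
  rintro _ ⟨J, c, hJ, rfl⟩ ⟨⟨p, hpK, hpB⟩, ⟨q, hqK, hqB⟩⟩
  obtain ⟨i, hiJ, hiI⟩ := Finset.exists_mem_notMem_of_card_lt_card (s := I) (t := J) (by omega)
  rw [hB] at hpB hqB
  have hp := hpB i
  have hq := hqB i
  rw [hpK i hiJ] at hp
  rw [hqK i hiJ] at hq
  rcases hxy i (Finset.mem_compl.2 hiI) with h | h
  · linarith [hp.2, hq.1]
  · linarith [hp.1, hq.2]

theorem exists_seq_pairwise_noCommonFlat {F : Set (Set (Fin d → ℝ))} (hbox : ∀ B ∈ F, IsBox B)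
    (hm : m < d) (hnp : ¬ PiercedByFlats m F) (hp : PiercedByFlats (m + 1) F) :
    ∃ B : ℕ → Set (Fin d → ℝ), (∀ n, B n ∈ F) ∧
      Pairwise fun n n' => NoCommonFlat m (B n) (B n') := by
  choose a b hab hB using fun x : F => hbox x x.2
  obtain ⟨f, ⟨I, c, hI, rfl⟩, hf⟩ :=
    exists_flat_frequently_meets hp (frequently_piercingFilter_iff.2 hnp)
  let l := comap ((↑) : F → Set (Fin d → ℝ)) (piercingFilter d m) ⊓
    𝓟 {x | ((x : Set (Fin d → ℝ)) ∩ {p | ∀ i ∈ I, p i = c i}).Nonempty}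
  have : l.NeBot := by
    rw [← frequently_mem_iff_neBot, frequently_comap]
    exact hf.mono fun B ⟨hBF, hBf⟩ => ⟨⟨B, hBF⟩, rfl, hBf⟩
  have hpts : PointsNegligible a b Iᶜ l :=
    pointsNegligible_of_eventually_meets_flat hB
      (fun K hK => ((eventually_piercingFilter_not_meets hK).comap _).filter_mono inf_le_left)
      (by omega) (mem_inf_of_right (mem_principal_self _))
  obtain ⟨x, hx⟩ := exists_seq_separatedOn hab Iᶜ hpts
  refine ⟨fun n => x n, fun n => (x n).2, fun n n' hnn' => ?_⟩
  rcases hnn'.lt_or_gt with h | h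
  · exact noCommonFlat_of_separatedOn hB (by omega) (hx _ _ h)
  · exact noCommonFlat_of_separatedOn hB (by omega) (hx _ _ h).symm

end Boxes

theorem stmt7_general (d k : ℕ)
    (F : Set (Set (Fin d → ℝ)))
    (hbox : ∀ B ∈ F, IsBox B)
    (hnp : ¬ PiercedByFlats k F) :
    ∃ B : ℕ → Set (Fin d → ℝ), (∀ n, B n ∈ F) ∧ Function.Injective B ∧
      ∀ i j : ℕ, i ≠ j → ∀ K, IsAxisFlat k K →
        ¬ ((K ∩ B i).Nonempty ∧ (K ∩ B j).Nonempty) := by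
  obtain ⟨m, hkm, hmd, hnpm, hpm⟩ := exists_not_piercedByFlats_and_succ hbox hnp
  obtain ⟨B, hBF, hB⟩ := exists_seq_pairwise_noCommonFlat hbox hmd hnpm hpm
  refine ⟨B, hBF, fun n n' hBB => ?_, fun n n' hnn' => (hB hnn').of_le hkm⟩
  by_contra hnn'
  exact (hB hnn').ne (hbox _ (hBF n)).nonempty hBB

theorem stmt7 (d k : ℕ) (hk : k < d)
    (F : Set (Set (Fin d → ℝ))) (hF : F.Infinite)
    (hbox : ∀ B ∈ F, IsBox B)
    (hnp : ¬ PiercedByFlats k F) :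
    ∃ B : ℕ → Set (Fin d → ℝ), (∀ n, B n ∈ F) ∧ Function.Injective B ∧
      ∀ i j : ℕ, i ≠ j → ∀ K, IsAxisFlat k K →
        ¬ ((K ∩ B i).Nonempty ∧ (K ∩ B j).Nonempty) :=
  stmt7_general d k F hbox hnp
end

section
/- Let 0 ≤ k < d and let F be an infinite collection of axis-parallel boxes in ℝ^d satisfying the (ℵ₀,2)-property for axis-parallel k-flats: every infinite sequence of members of F contains two distinct boxes that can both be intersected by a single axis-parallel k-flat. Then F can be pierced by finitely many axis-parallel k-flats. -/
open Set

section core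

variable {d : ℕ} {α : Type} (m : ℕ) (lo hi : α → Fin d → ℝ)

open Classical in
/-- Set of coordinates where the intervals of `B` and `C` overlap. -/
noncomputable def ovS (B C : α) : Finset (Fin d) :=
  Finset.univ.filter fun i => lo C i ≤ hi B i ∧ lo B i ≤ hi C i

/-- Abstract "pierceable by finitely many m-flats". -/
def Pier (s : Set α) : Prop :=
  ∃ L : Finset (Finset (Fin d) × (Fin d → ℝ)),
    (∀ p ∈ L, p.1.card = m) ∧
    ∀ C ∈ s, ∃ p ∈ L, ∀ i ∈ p.1, lo C i ≤ p.2 i ∧ p.2 i ≤ hi C i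

lemma pier_mono {s t : Set α} (hst : s ⊆ t) (h : Pier m lo hi t) : Pier m lo hi s := by
  obtain ⟨L, h1, h2⟩ := h
  exact ⟨L, h1, fun C hC => h2 C (hst hC)⟩

lemma pier_union {s t : Set α} (hs : Pier m lo hi s) (ht : Pier m lo hi t) :
    Pier m lo hi (s ∪ t) := by
  obtain ⟨L, h1, h2⟩ := hs
  obtain ⟨L', h1', h2'⟩ := ht
  refine ⟨L ∪ L', ?_, ?_⟩
  · intro p hp
    rcases Finset.mem_union.1 hp with h | h
    exacts [h1 p h, h1' p h]
  · rintro C (hC | hC)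
    · obtain ⟨p, hp, hh⟩ := h2 C hC
      exact ⟨p, Finset.mem_union_left _ hp, hh⟩
    · obtain ⟨p, hp, hh⟩ := h2' C hC
      exact ⟨p, Finset.mem_union_right _ hp, hh⟩

lemma pier_empty : Pier m lo hi (∅ : Set α) := ⟨∅, by simp, by simp⟩

lemma core (hlohi : ∀ B i, lo B i ≤ hi B i)
    (hns : ¬ ∃ f : ℕ → α, ∀ s t : ℕ, s < t → ((ovS lo hi (f s) (f t)).card < m)) :
    Pier m lo hi (Set.univ : Set α) := by
  classical
  by_contra hP
  -- the filter of sets with pierceable complement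
  let F0 : Filter α :=
    { sets := {s | Pier m lo hi sᶜ}
      univ_sets := by
        show Pier m lo hi (Set.univ : Set α)ᶜ
        rw [Set.compl_univ]; exact pier_empty m lo hi
      sets_of_superset := fun {s t} hs hst =>
        pier_mono m lo hi (Set.compl_subset_compl.2 hst) hs
      inter_sets := fun {s t} hs ht => by
        show Pier m lo hi (s ∩ t)ᶜ
        rw [Set.compl_inter]
        exact pier_union m lo hi hs ht }
  have hmemF0 : ∀ s : Set α, s ∈ F0 ↔ Pier m lo hi sᶜ := fun s => Iff.rfl
  have hne : F0.NeBot := by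
    refine ⟨fun hbot => hP ?_⟩
    have h0 : (∅ : Set α) ∈ F0 := by rw [hbot]; exact Filter.mem_bot
    have := (hmemF0 ∅).1 h0
    rwa [Set.compl_empty] at this
  haveI := hne
  let U : Ultrafilter α := Ultrafilter.of F0
  have hUle : (U : Filter α) ≤ F0 := Ultrafilter.of_le F0
  have hUnI : ∀ s : Set α, Pier m lo hi s → s ∉ U := by
    intro s hs hsU
    have h1 : sᶜ ∈ F0 := by
      rw [hmemF0, compl_compl]; exact hs
    have h2 : sᶜ ∈ U := hUle h1
    have h3 : s ∩ sᶜ ∈ U := Filter.inter_mem hsU h2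
    rw [Set.inter_compl_self] at h3
    exact Filter.empty_notMem (U : Filter α) h3
  set D : α → Set α := fun B => {C | (ovS lo hi B C).card < m} with hD
  set G : Set α := {B | D B ∈ U} with hG
  by_cases hGU : G ∈ U
  · -- Case 1: build an infinite pairwise scattered sequence
    have pickP : ∀ s : Set α, s ∈ U → ∃ B, B ∈ s := fun s hs => Ultrafilter.nonempty_of_mem hs
    let step : {p : Set α // p ∈ U ∧ p ⊆ G} → {p : Set α // p ∈ U ∧ p ⊆ G} := fun q =>
      ⟨q.1 ∩ D ((pickP q.1 q.2.1).choose),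
        ⟨by
          refine Filter.inter_mem q.2.1 ?_
          have hmem : (pickP q.1 q.2.1).choose ∈ G := q.2.2 (pickP q.1 q.2.1).choose_spec
          exact hmem,
        fun C hC => q.2.2 hC.1⟩⟩
    let S : ℕ → {p : Set α // p ∈ U ∧ p ⊆ G} := fun n => step^[n] ⟨G, hGU, subset_rfl⟩
    let f : ℕ → α := fun n => (pickP (S n).1 (S n).2.1).choose
    have hstep : ∀ n, (S (n + 1)).1 = (S n).1 ∩ D (f n) := by
      intro n
      show (step^[n + 1] _).1 = _
      rw [Function.iterate_succ_apply']
    have hsub : ∀ n, (S (n + 1)).1 ⊆ (S n).1 := by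
      intro n
      rw [hstep]
      exact Set.inter_subset_left
    have hmono : ∀ s t : ℕ, s ≤ t → (S t).1 ⊆ (S s).1 := by
      intro s t h
      induction h with
      | refl => exact subset_rfl
      | step h ih => exact (hsub _).trans ih
    have hDf : ∀ s t : ℕ, s < t → f t ∈ D (f s) := by
      intro s t h
      have h1 : f t ∈ (S t).1 := (pickP (S t).1 (S t).2.1).choose_spec
      have h2 : (S t).1 ⊆ (S (s + 1)).1 := hmono _ _ h
      have h3 := h2 h1
      rw [hstep] at h3
      exact h3.2
    exact hns ⟨f, fun s t h => hDf s t h⟩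
  · -- Case 2: find a single flat piercing a U-large set
    have hGc : Gᶜ ∈ U := Ultrafilter.compl_mem_iff_notMem.2 hGU
    have hHB : ∀ B : α, B ∉ G → {C | m ≤ (ovS lo hi B C).card} ∈ U := by
      intro B hB
      have h1 : (D B)ᶜ ∈ U := Ultrafilter.compl_mem_iff_notMem.2 hB
      have h2 : (D B)ᶜ = {C | m ≤ (ovS lo hi B C).card} := by
        ext C
        simp [hD, not_lt]
      rwa [h2] at h1
    have hExT : ∀ B : α, B ∉ G → ∃ T : Finset (Fin d), T.card = m ∧
        {C | ∀ i ∈ T, i ∈ ovS lo hi B C} ∈ U := by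
      intro B hB
      have hH : {C | m ≤ (ovS lo hi B C).card} ∈ U := hHB B hB
      set σ : α → Finset (Fin d) := fun C =>
        if h : m ≤ (ovS lo hi B C).card then (Finset.exists_subset_card_eq h).choose else ∅
        with hσdef
      have hσ : ∀ C, m ≤ (ovS lo hi B C).card → σ C ⊆ ovS lo hi B C ∧ (σ C).card = m := by
        intro C h
        have : σ C = (Finset.exists_subset_card_eq h).choose := by
          rw [hσdef]; simp [h]
        rw [this]
        exact (Finset.exists_subset_card_eq h).choose_spec
      have hcover : {C | m ≤ (ovS lo hi B C).card} ⊆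
          ⋃ T ∈ (Set.univ : Set (Finset (Fin d))),
            {C | m ≤ (ovS lo hi B C).card ∧ σ C = T} := by
        intro C hC
        exact Set.mem_biUnion (Set.mem_univ (σ C)) ⟨hC, rfl⟩
      have hU2 : (⋃ T ∈ (Set.univ : Set (Finset (Fin d))),
          {C | m ≤ (ovS lo hi B C).card ∧ σ C = T}) ∈ U :=
        Filter.mem_of_superset hH hcover
      obtain ⟨T, -, hT⟩ := (Ultrafilter.finite_biUnion_mem_iff Set.finite_univ).1 hU2
      obtain ⟨C0, hC0⟩ := Ultrafilter.nonempty_of_mem hT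
      refine ⟨T, ?_, Filter.mem_of_superset hT ?_⟩
      · have h1 := (hσ C0 hC0.1).2
        rw [hC0.2] at h1
        exact h1
      · intro C hC i hiT
        have hs2 := (hσ C hC.1).1
        rw [hC.2] at hs2
        exact hs2 hiT
    set Tof : α → Finset (Fin d) := fun B =>
      if h : ∃ T : Finset (Fin d), T.card = m ∧ {C | ∀ i ∈ T, i ∈ ovS lo hi B C} ∈ U
      then h.choose else ∅ with hTofdef
    have hTof : ∀ B : α, B ∉ G →
        (Tof B).card = m ∧ {C | ∀ i ∈ Tof B, i ∈ ovS lo hi B C} ∈ U := by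
      intro B hB
      have h := hExT B hB
      have : Tof B = h.choose := by rw [hTofdef]; simp [h]
      rw [this]
      exact h.choose_spec
    have hcover2 : Gᶜ ⊆ ⋃ T ∈ (Set.univ : Set (Finset (Fin d))),
        {B | B ∉ G ∧ Tof B = T} := fun B hB =>
      Set.mem_biUnion (Set.mem_univ (Tof B)) ⟨hB, rfl⟩
    obtain ⟨T', -, hT'⟩ := (Ultrafilter.finite_biUnion_mem_iff Set.finite_univ).1
      (Filter.mem_of_superset hGc hcover2)
    obtain ⟨B0, hB0⟩ := Ultrafilter.nonempty_of_mem hT'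
    have hT'card : T'.card = m := by
      have h1 := (hTof B0 hB0.1).1
      rwa [hB0.2] at h1
    have hOvU : ∀ B : α, B ∈ {B | B ∉ G ∧ Tof B = T'} →
        {C | ∀ i ∈ T', i ∈ ovS lo hi B C} ∈ U := by
      intro B hB
      have h1 := (hTof B hB.1).2
      rwa [hB.2] at h1
    -- for each coordinate in T' find a common piercing value
    have key : ∀ i ∈ T', ∃ x : ℝ,
        {C : α | lo C i ≤ x} ∈ U ∧ {C : α | x ≤ hi C i} ∈ U := by
      intro i hiT
      by_contra hno
      push_neg at hno
      set A : Set ℝ := {x | {C : α | lo C i ≤ x} ∈ U} with hA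
      set A' : Set ℝ := {x | {C : α | x ≤ hi C i} ∈ U} with hA'
      have hup : ∀ {x y : ℝ}, x ≤ y → x ∈ A → y ∈ A := by
        intro x y hxy hx
        exact Filter.mem_of_superset hx (fun C hC => le_trans hC hxy)
      have hmemA : ∀ B ∈ {B | B ∉ G ∧ Tof B = T'}, hi B i ∈ A := by
        intro B hB
        refine Filter.mem_of_superset (hOvU B hB) ?_
        intro C hC
        have h2 := (Finset.mem_filter.1 (hC i hiT)).2
        exact h2.1
      have hmemA' : ∀ B ∈ {B | B ∉ G ∧ Tof B = T'}, lo B i ∈ A' := by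
        intro B hB
        refine Filter.mem_of_superset (hOvU B hB) ?_
        intro C hC
        have h2 := (Finset.mem_filter.1 (hC i hiT)).2
        exact h2.2
      have hdisj : ∀ x : ℝ, x ∉ A ∨ x ∉ A' := by
        intro x
        by_contra h
        push_neg at h
        exact hno x h.1 h.2
      have hAne : A.Nonempty := ⟨hi B0 i, hmemA B0 hB0⟩
      have hA'ne : A'.Nonempty := ⟨lo B0 i, hmemA' B0 hB0⟩
      have hlb : ∀ y ∈ A', ∀ z ∈ A, y ≤ z := by
        intro y hy z hz
        by_contra h
        push_neg at h
        have hyA : y ∈ A := hup (le_of_lt h) hz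
        rcases hdisj y with h' | h'
        · exact h' hyA
        · exact h' hy
      have hbdd : BddBelow A := ⟨lo B0 i, fun z hz => hlb _ (hmemA' B0 hB0) z hz⟩
      set s := sInf A with hs
      have hges : ∀ B ∈ {B | B ∉ G ∧ Tof B = T'}, s ≤ hi B i :=
        fun B hB => csInf_le hbdd (hmemA B hB)
      have hles : ∀ B ∈ {B | B ∉ G ∧ Tof B = T'}, lo B i ≤ s :=
        fun B hB => le_csInf hAne (hlb _ (hmemA' B hB))
      by_cases hsA : s ∈ A
      · have hsA' : s ∉ A' := by
          rcases hdisj s with h' | h'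
          · exact absurd hsA h'
          · exact h'
        have hcU : {C : α | s ≤ hi C i}ᶜ ∈ U := Ultrafilter.compl_mem_iff_notMem.2 hsA'
        obtain ⟨B, hBc, hBlt⟩ := Ultrafilter.nonempty_of_mem (Filter.inter_mem hT' hcU)
        exact hBlt (hges B hBc)
      · have hcU : {C : α | lo C i ≤ s}ᶜ ∈ U := Ultrafilter.compl_mem_iff_notMem.2 hsA
        obtain ⟨B, hBc, hBlt⟩ := Ultrafilter.nonempty_of_mem (Filter.inter_mem hT' hcU)
        exact hBlt (hles B hBc)
    choose xf hx1 hx2 using key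
    set x : Fin d → ℝ := fun i => if h : i ∈ T' then xf i h else 0 with hx
    have hWU : {C : α | ∀ i ∈ T', lo C i ≤ x i ∧ x i ≤ hi C i} ∈ U := by
      have h1 : (⋂ i ∈ T', ({C : α | lo C i ≤ x i} ∩ {C : α | x i ≤ hi C i})) ∈ U := by
        refine (Filter.biInter_finset_mem T').2 ?_
        intro i hiT
        have e : x i = xf i hiT := by rw [hx]; simp [hiT]
        refine Filter.inter_mem ?_ ?_
        · rw [show {C : α | lo C i ≤ x i} = {C : α | lo C i ≤ xf i hiT} by rw [e]]
          exact hx1 i hiT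
        · rw [show {C : α | x i ≤ hi C i} = {C : α | xf i hiT ≤ hi C i} by rw [e]]
          exact hx2 i hiT
      refine Filter.mem_of_superset h1 ?_
      intro C hC i hiT
      have := Set.mem_iInter₂.1 hC i hiT
      exact ⟨this.1, this.2⟩
    have hPW : Pier m lo hi {C : α | ∀ i ∈ T', lo C i ≤ x i ∧ x i ≤ hi C i} := by
      refine ⟨{(T', x)}, ?_, ?_⟩
      · intro p hp
        rw [Finset.mem_singleton] at hp
        rw [hp]
        exact hT'card
      · intro C hC
        exact ⟨(T', x), Finset.mem_singleton_self _, fun i hiT => hC i hiT⟩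
    exact hUnI _ hPW hWU

end core

theorem stmt8 (d k : ℕ) (hk : k < d)
    (F : Set (Set (Fin d → ℝ))) (hF : F.Infinite)
    (hbox : ∀ B ∈ F, IsBox B)
    (hprop : ∀ f : ℕ → Set (Fin d → ℝ), (∀ n, f n ∈ F) →
      ∃ i j : ℕ, i ≠ j ∧ ∃ K, IsAxisFlat k K ∧
        (K ∩ f i).Nonempty ∧ (K ∩ f j).Nonempty) :
    PiercedByFlats k F := by
  classical
  have hbox' : ∀ B : {B : Set (Fin d → ℝ) // B ∈ F}, IsBox (B : Set (Fin d → ℝ)) :=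
    fun B => hbox B.1 B.2
  choose lo hi hspec using hbox'
  have hlohi : ∀ (B : {B : Set (Fin d → ℝ) // B ∈ F}) i, lo B i ≤ hi B i :=
    fun B => (hspec B).1
  have hBeq : ∀ B : {B : Set (Fin d → ℝ) // B ∈ F}, (B : Set (Fin d → ℝ)) =
      {x | ∀ i, x i ∈ Set.Icc (lo B i) (hi B i)} := fun B => (hspec B).2
  -- no infinite scattered sequence
  have hns : ¬ ∃ f : ℕ → {B : Set (Fin d → ℝ) // B ∈ F},
      ∀ s t : ℕ, s < t → ((ovS lo hi (f s) (f t)).card < d - k) := by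
    rintro ⟨f, hf⟩
    obtain ⟨i, j, hij, K, hKflat, h1, h2⟩ := hprop (fun n => (f n : Set (Fin d → ℝ)))
      (fun n => (f n).2)
    obtain ⟨I, c, hcard, hKeq⟩ := hKflat
    have hmem : ∀ n : ℕ, (K ∩ (f n : Set (Fin d → ℝ))).Nonempty →
        ∀ ℓ ∈ I, lo (f n) ℓ ≤ c ℓ ∧ c ℓ ≤ hi (f n) ℓ := by
      intro n hn ℓ hℓ
      obtain ⟨z, hzK, hzB⟩ := hn
      have hz1 : z ℓ = c ℓ := by
        rw [hKeq] at hzK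
        exact hzK ℓ hℓ
      have hz2 : z ℓ ∈ Set.Icc (lo (f n) ℓ) (hi (f n) ℓ) := by
        rw [hBeq (f n)] at hzB
        exact hzB ℓ
      rw [hz1] at hz2
      exact ⟨hz2.1, hz2.2⟩
    have hi' := hmem i h1
    have hj' := hmem j h2
    have hsub : ∀ s t : ℕ, (∀ ℓ ∈ I, lo (f s) ℓ ≤ c ℓ ∧ c ℓ ≤ hi (f s) ℓ) →
        (∀ ℓ ∈ I, lo (f t) ℓ ≤ c ℓ ∧ c ℓ ≤ hi (f t) ℓ) →
        I ⊆ ovS lo hi (f s) (f t) := by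
      intro s t hs ht ℓ hℓ
      rw [ovS, Finset.mem_filter]
      exact ⟨Finset.mem_univ ℓ, le_trans (ht ℓ hℓ).1 (hs ℓ hℓ).2,
        le_trans (hs ℓ hℓ).1 (ht ℓ hℓ).2⟩
    have hle : ∀ s t : ℕ, s < t → ¬ (I ⊆ ovS lo hi (f s) (f t)) := by
      intro s t hst hsub'
      have hc := hf s t hst
      have := Finset.card_le_card hsub'
      rw [hcard] at this
      omega
    rcases hij.lt_or_gt with h | h
    · exact hle i j h (hsub i j hi' hj')
    · exact hle j i h (hsub j i hj' hi')
  have hcore := core (d - k) lo hi hlohi hns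
  obtain ⟨L, hL1, hL2⟩ := hcore
  refine ⟨L.image (fun p => {z : Fin d → ℝ | ∀ i ∈ p.1, z i = p.2 i}), ?_, ?_⟩
  · intro g hg
    obtain ⟨p, hp, hpe⟩ := Finset.mem_image.1 hg
    exact ⟨p.1, p.2, hL1 p hp, hpe.symm⟩
  · intro B hB
    obtain ⟨p, hp, hcond⟩ := hL2 ⟨B, hB⟩ (Set.mem_univ _)
    refine ⟨{z : Fin d → ℝ | ∀ i ∈ p.1, z i = p.2 i}, Finset.mem_image_of_mem _ hp, ?_⟩
    refine ⟨fun i => if i ∈ p.1 then p.2 i else lo ⟨B, hB⟩ i, ?_, ?_⟩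
    · refine (Set.ext_iff.1 (hBeq ⟨B, hB⟩) _).2 ?_
      intro i
      by_cases hip : i ∈ p.1
      · simp only [if_pos hip]
        exact ⟨(hcond i hip).1, (hcond i hip).2⟩
      · simp only [if_neg hip]
        exact ⟨le_refl _, hlohi _ i⟩
    · intro i hip
      simp only [if_pos hip]
end

section
/- Let 0 ≤ k < d, let h = {x ∈ ℝ^d : x₁ = a} be an axis-parallel hyperplane, and let B₁, B₂ be axis-parallel boxes each intersecting h. If some axis-parallel k-flat in ℝ^d intersects both B₁ and B₂, then there is an axis-parallel k-flat contained in h that intersects both B₁ ∩ h and B₂ ∩ h (equivalently, identifying h with ℝ^{d−1}, an axis-parallel k-flat of ℝ^{d−1} intersecting both slices). -/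
open Set

/-- The index `0` of `Fin d`, available whenever `0 < d`. -/
def fin0 (d : ℕ) (hd : 0 < d) : Fin d := ⟨0, hd⟩

theorem stmt9 (d k : ℕ) (hd : 0 < d) (hk : k < d) (a : ℝ)
    (B₁ B₂ : Set (Fin d → ℝ)) (hB₁ : IsBox B₁) (hB₂ : IsBox B₂)
    (hm₁ : (B₁ ∩ {x | x (fin0 d hd) = a}).Nonempty)
    (hm₂ : (B₂ ∩ {x | x (fin0 d hd) = a}).Nonempty)
    (hK : ∃ K, IsAxisFlat k K ∧ (K ∩ B₁).Nonempty ∧ (K ∩ B₂).Nonempty) :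
    ∃ (I : Finset (Fin d)) (c : Fin d → ℝ),
      I.card = d - k ∧ fin0 d hd ∈ I ∧ c (fin0 d hd) = a ∧
      ({x | ∀ i ∈ I, x i = c i} ∩ (B₁ ∩ {x | x (fin0 d hd) = a})).Nonempty ∧
      ({x | ∀ i ∈ I, x i = c i} ∩ (B₂ ∩ {x | x (fin0 d hd) = a})).Nonempty := by
  obtain ⟨K, ⟨I, c, hcard, hKeq⟩, hK₁, hK₂⟩ := hK
  set x₀ := fin0 d hd with hx₀
  have hIne : I.Nonempty := Finset.card_pos.mp (by omega)
  set j : Fin d := if x₀ ∈ I then x₀ else hIne.choose with hj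
  have hjI : j ∈ I := by
    by_cases h : x₀ ∈ I
    · simp [hj, h]
    · simp [hj, h, hIne.choose_spec]
  set I' : Finset (Fin d) := insert x₀ (I.erase j) with hI'
  have hcard' : I'.card = d - k := by
    by_cases h : x₀ ∈ I
    · have : j = x₀ := by simp [hj, h]
      rw [hI', this, Finset.insert_erase h, hcard]
    · have hjx : j ≠ x₀ := fun e => h (e ▸ hjI)
      have hx₀e : x₀ ∉ I.erase j := fun hh => h (Finset.mem_of_mem_erase hh)
      rw [hI', Finset.card_insert_of_notMem hx₀e,
        Finset.card_erase_of_mem hjI, hcard]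
      omega
  set c' : Fin d → ℝ := Function.update c x₀ a with hc'
  have hc'x₀ : c' x₀ = a := Function.update_self _ _ _
  have key : ∀ (B : Set (Fin d → ℝ)), IsBox B → (K ∩ B).Nonempty →
      (B ∩ {x | x x₀ = a}).Nonempty →
      ({x | ∀ i ∈ I', x i = c' i} ∩ (B ∩ {x | x x₀ = a})).Nonempty := by
    intro B hB hKB hm
    obtain ⟨lo, hi, _, hBeq⟩ := hB
    obtain ⟨p, hpK, hpB⟩ := hKB
    obtain ⟨y, hyB, hy0⟩ := hm
    rw [hKeq] at hpK
    refine ⟨fun i => if i ∈ I' then c' i else p i, ?_, ?_, ?_⟩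
    · intro i hi'
      simp [hi']
    · rw [hBeq]
      intro i
      by_cases hi : i ∈ I'
      · simp only [hi, if_true]
        by_cases hix : i = x₀
        · subst hix
          rw [hc'x₀]
          rw [hBeq] at hyB
          have h2 := hyB x₀
          have hy0' : y x₀ = a := hy0
          rwa [hy0'] at h2
        · have hiI : i ∈ I := Finset.mem_of_mem_erase
            ((Finset.mem_insert.mp hi).resolve_left hix)
          have : c' i = c i := Function.update_of_ne hix _ _
          rw [this, ← hpK i hiI]
          rw [hBeq] at hpB
          exact hpB i
      · simp only [hi, if_false]
        rw [hBeq] at hpB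
        exact hpB i
    · have hx₀I' : x₀ ∈ I' := Finset.mem_insert_self _ _
      simp [hx₀I', hc'x₀]
  exact ⟨I', c', hcard', Finset.mem_insert_self _ _, hc'x₀,
    key B₁ hB₁ hK₁ hm₁, key B₂ hB₂ hK₂ hm₂⟩
end

section
/- Let 0 ≤ k < d and let F be a family of axis-parallel boxes in ℝ^d, all intersecting the hyperplane h = {x : x₁ = a}. If the family of slices {B ∩ h : B ∈ F}, viewed as boxes in ℝ^{d−1}, cannot be pierced by finitely many axis-parallel k-flats of ℝ^{d−1}, then F cannot be pierced by finitely many axis-parallel k-flats of ℝ^d. -/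
open Set

/-- Slice of a set of `ℝ^{d+1}` by the hyperplane `x₀ = a`, viewed in `ℝ^d`. -/
def sliceAt {d : ℕ} (a : ℝ) (B : Set (Fin (d + 1) → ℝ)) : Set (Fin d → ℝ) :=
  {y | Fin.cons a y ∈ B}

lemma slice_flat {d k : ℕ} (hk : k < d + 1) (a : ℝ) {f : Set (Fin (d+1) → ℝ)}
    (hf : IsAxisFlat k f) :
    ∃ f' : Set (Fin d → ℝ), IsAxisFlat k f' ∧
      ∀ B : Set (Fin (d+1) → ℝ), IsBox B → (B ∩ {x | x 0 = a}).Nonempty →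
        (B ∩ f).Nonempty → ((sliceAt a B) ∩ f').Nonempty := by
  obtain ⟨I, c, hcard, rfl⟩ := hf
  set I' : Finset (Fin d) := Finset.univ.filter (fun j => j.succ ∈ I) with hI'def
  have hI' : I'.image Fin.succ = I.erase 0 := by
    ext i
    simp only [Finset.mem_image, Finset.mem_erase, hI'def, Finset.mem_filter,
      Finset.mem_univ, true_and]
    constructor
    · rintro ⟨j, hj, rfl⟩; exact ⟨Fin.succ_ne_zero j, hj⟩
    · rintro ⟨h0, hi⟩
      obtain ⟨j, rfl⟩ := Fin.eq_succ_of_ne_zero h0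
      exact ⟨j, hi, rfl⟩
  have hcard' : I'.card = (I.erase 0).card := by
    rw [← hI', Finset.card_image_of_injective _ (Fin.succ_injective d)]
  have hJ : ∃ J : Finset (Fin d), J.card = d - k ∧ J ⊆ I' := by
    by_cases h0 : (0 : Fin (d+1)) ∈ I
    · refine ⟨I', ?_, le_refl _⟩
      rw [hcard', Finset.card_erase_of_mem h0, hcard]
      omega
    · have : I'.card = d + 1 - k := by
        rw [hcard', Finset.erase_eq_of_notMem h0, hcard]
      have hne : I'.Nonempty := by
        rw [← Finset.card_pos, this]; omega
      obtain ⟨j0, hj0⟩ := hne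
      refine ⟨I'.erase j0, ?_, Finset.erase_subset _ _⟩
      rw [Finset.card_erase_of_mem hj0, this]; omega
  obtain ⟨J, hJcard, hJsub⟩ := hJ
  refine ⟨{y | ∀ j ∈ J, y j = c j.succ}, ⟨J, fun j => c j.succ, hJcard, rfl⟩, ?_⟩
  rintro B ⟨lo, hi, hab, rfl⟩ ⟨z, hzB, hz0⟩ ⟨x, hxB, hxf⟩
  refine ⟨fun j => x j.succ, ?_, ?_⟩
  · intro i
    refine Fin.cases ?_ ?_ i
    · have h := hzB 0
      rw [← show z 0 = a from hz0]
      simpa using h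
    · intro j; simpa using hxB j.succ
  · intro j hj
    have : j.succ ∈ I := by
      have := hJsub hj; simpa [hI'def] using this
    exact hxf j.succ this

theorem stmt10 (d k : ℕ) (hk : k < d + 1) (a : ℝ)
    (F : Set (Set (Fin (d + 1) → ℝ)))
    (hbox : ∀ B ∈ F, IsBox B)
    (hmeet : ∀ B ∈ F, (B ∩ {x | x 0 = a}).Nonempty)
    (hslice : ¬ PiercedByFlats k ((sliceAt a) '' F)) :
    ¬ PiercedByFlats k F := by
  rintro ⟨K, hK, hp⟩
  apply hslice
  classical
  refine ⟨K.attach.image (fun f => (slice_flat hk a (hK f.1 f.2)).choose), ?_, ?_⟩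
  · intro f' hf'
    simp only [Finset.mem_image, Finset.mem_attach, true_and] at hf'
    obtain ⟨f, rfl⟩ := hf'
    exact (slice_flat hk a (hK f.1 f.2)).choose_spec.1
  · rintro B' ⟨B, hB, rfl⟩
    obtain ⟨f, hfK, hBf⟩ := hp B hB
    refine ⟨(slice_flat hk a (hK f hfK)).choose, ?_, ?_⟩
    · exact Finset.mem_image_of_mem _ (Finset.mem_attach _ ⟨f, hfK⟩)
    · exact (slice_flat hk a (hK f hfK)).choose_spec.2 B (hbox B hB) (hmeet B hB) hBf
end

section
/- Let {F_n}_{n∈ℕ} be a sequence of families of axis-parallel boxes in ℝ^d and 0 ≤ k < d. Suppose no F_n can be pierced by finitely many axis-parallel k-flats. Then there exist a strictly increasing sequence n₁ < n₂ < ⋯ of natural numbers and boxes B_m ∈ F_{n_m} such that no axis-parallel k-flat intersects two distinct boxes B_m, B_{m'}. -/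
open Set

/-!
A box is encoded by its two extreme corners, and two boxes are *linked* along a set `C` of axes
if their projections to some axis of `C` overlap. If `F` cannot be pierced by finitely many
`k`-flats, then for some set `W` of `k + 1` axes it cannot be pierced by finitely many
hyperplanes orthogonal to axes of `W`: otherwise the union of the piercing sets would prescribe
`d - k` coordinates of a point in every box. A `k`-flat fixes `d - k` coordinates, one of them in
`W`, so it can only meet two boxes that are linked along `W`. It therefore suffices to pick
boxes from infinitely many families, pairwise unlinked along `W`, which is done by induction on
`W`. For an axis `z ∈ W`, a supremum argument on the `z`-edges finds non-pierceable subfamilies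
whose `z`-edges accumulate at a point of `[-∞, ∞]` from one side; selecting from them along
`W \ {z}` yields arbitrarily many boxes pairwise unlinked along `W`. A box linked to `|W| + 1`
such boxes is pierced by one of the hyperplanes through their upper faces, so one of them is
unlinked from a non-pierceable part of infinitely many families, and a greedy choice finishes.
-/

open Filter Order

namespace BoxPiercing

/-- The box `∏ i, [p.1 i, p.2 i]`. -/
abbrev Box (d : ℕ) := (Fin d → ℝ) × (Fin d → ℝ)

variable {d : ℕ}

def Box.toSet (p : Box d) : Set (Fin d → ℝ) := {x | ∀ i, x i ∈ Icc (p.1 i) (p.2 i)}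

def boxesOf (F : Set (Set (Fin d → ℝ))) : Set (Box d) := {p | p.toSet ∈ F}

def OverlapsAt (i : Fin d) (p q : Box d) : Prop := p.1 i ≤ q.2 i ∧ q.1 i ≤ p.2 i

def Linked (C : Finset (Fin d)) (p q : Box d) : Prop := ∃ i ∈ C, OverlapsAt i p q

theorem OverlapsAt.symm {i : Fin d} {p q : Box d} (h : OverlapsAt i p q) : OverlapsAt i q p :=
  ⟨h.2, h.1⟩

theorem Linked.symm {C : Finset (Fin d)} {p q : Box d} (h : Linked C p q) : Linked C q p :=
  let ⟨i, hi, h⟩ := h; ⟨i, hi, h.symm⟩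

theorem pairwise_not_linked_of_lt {C : Finset (Fin d)} {B : ℕ → Box d}
    (h : ∀ ⦃t t'⦄, t < t' → ¬ Linked C (B t) (B t')) :
    Pairwise fun t t' => ¬ Linked C (B t) (B t') :=
  fun _ _ hne hl => hne.lt_or_gt.elim (fun hlt => h hlt hl) fun hgt => h hgt hl.symm

theorem OverlapsAt.upper_mem_or {i : Fin d} {p q r : Box d} (hq : OverlapsAt i p q)
    (hr : OverlapsAt i p r) (hqr : ¬ OverlapsAt i q r) :
    q.2 i ∈ Icc (p.1 i) (p.2 i) ∨ r.2 i ∈ Icc (p.1 i) (p.2 i) := by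
  unfold OverlapsAt at *
  rcases not_and_or.1 hqr with h | h <;> push Not at h
  · exact Or.inr ⟨hr.1, h.le.trans hq.2⟩
  · exact Or.inl ⟨hq.1, h.le.trans hr.2⟩

/-- A pair `h : Fin d × ℝ` stands for the hyperplane `x h.1 = h.2`. -/
def pierceIdeal (C : Finset (Fin d)) : Ideal (Set (Box d)) :=
  IsIdeal.toIdeal (I := {F | ∃ H : Finset (Fin d × ℝ), (∀ h ∈ H, h.1 ∈ C) ∧
      ∀ p ∈ F, ∃ h ∈ H, h.2 ∈ Icc (p.1 h.1) (p.2 h.1)})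
    { IsLowerSet := fun _ _ hsub ⟨H, hHC, hH⟩ => ⟨H, hHC, fun p hp => hH p (hsub hp)⟩
      Nonempty := ⟨∅, ∅, by simp, by simp⟩
      Directed := by
        rintro F ⟨H, hHC, hH⟩ F' ⟨H', hHC', hH'⟩
        classical
        refine ⟨F ∪ F', ⟨H ∪ H', ?_, ?_⟩, subset_union_left, subset_union_right⟩
        · simpa [or_imp, forall_and] using And.intro hHC hHC'
        · rintro p (hp | hp)
          · obtain ⟨h, hh, hph⟩ := hH p hp
            exact ⟨h, Finset.mem_union_left _ hh, hph⟩
          · obtain ⟨h, hh, hph⟩ := hH' p hp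
            exact ⟨h, Finset.mem_union_right _ hh, hph⟩ }

theorem pierceIdeal_mono {C C' : Finset (Fin d)} (h : C ⊆ C') : pierceIdeal C ≤ pierceIdeal C' :=
  fun _ ⟨H, hHC, hH⟩ => ⟨H, fun x hx => h (hHC x hx), hH⟩

theorem setOf_mem_Icc_mem_pierceIdeal {C : Finset (Fin d)} {z : Fin d} (hz : z ∈ C) (x : ℝ) :
    {p : Box d | x ∈ Icc (p.1 z) (p.2 z)} ∈ pierceIdeal C :=
  ⟨{(z, x)}, by simpa using hz, fun _ hp => ⟨(z, x), Finset.mem_singleton_self _, hp⟩⟩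

/-- By pigeonhole, `p` overlaps two of the `J t` along the same axis; since these two do not
overlap there, `p` is pierced by the hyperplane through the upper face of one of them. -/
theorem setOf_forall_linked_mem_pierceIdeal {ι : Type*} [Fintype ι] {C : Finset (Fin d)}
    (hcard : C.card < Fintype.card ι) {J : ι → Box d}
    (hJ : Pairwise fun t t' => ¬ Linked C (J t) (J t')) :
    {p | ∀ t, Linked C p (J t)} ∈ pierceIdeal C := by
  classical
  refine ⟨(Finset.univ ×ˢ C).image fun ti => (ti.2, (J ti.1).2 ti.2), ?_, ?_⟩
  · simp only [Finset.mem_image, Finset.mem_product]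
    rintro _ ⟨_, ⟨_, hi⟩, rfl⟩
    exact hi
  · intro p hp
    choose g hgC hg using hp
    obtain ⟨t, -, t', -, htt', hgt⟩ :=
      Finset.exists_ne_map_eq_of_card_lt_of_maps_to (s := Finset.univ) (by simpa using hcard)
        fun t _ => hgC t
    have hmem : ∀ s, (g t, (J s).2 (g t)) ∈
        (Finset.univ ×ˢ C).image fun ti => (ti.2, (J ti.1).2 ti.2) :=
      fun s => Finset.mem_image.2 ⟨(s, g t), by simp [hgC t], rfl⟩
    have hdisj : ¬ OverlapsAt (g t) (J t) (J t') := fun h => hJ htt' ⟨g t, hgC t, h⟩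
    rcases (hg t).upper_mem_or (hgt ▸ hg t') hdisj with h | h
    · exact ⟨_, hmem t, h⟩
    · exact ⟨_, hmem t', h⟩

theorem exists_frequently_not_linked {ι : Type*} [Fintype ι] {C : Finset (Fin d)}
    (hcard : C.card < Fintype.card ι) {J : ι → Box d}
    (hJ : Pairwise fun t t' => ¬ Linked C (J t) (J t')) {Φ : ℕ → Set (Box d)}
    (hΦ : ∃ᶠ m in atTop, Φ m ∉ pierceIdeal C) :
    ∃ t, ∃ᶠ m in atTop, {p ∈ Φ m | ¬ Linked C p (J t)} ∉ pierceIdeal C := by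
  refine frequently_exists.1 (hΦ.mono fun m hm => ?_)
  by_contra! h
  refine hm ((pierceIdeal C).lower ?_ ((pierceIdeal C).sup_mem (Ideal.iSup_mem h)
    (setOf_forall_linked_mem_pierceIdeal hcard hJ)))
  intro p hp
  by_cases hl : ∀ t, Linked C p (J t)
  · exact Or.inr hl
  · push Not at hl
    obtain ⟨t, ht⟩ := hl
    exact Or.inl (mem_iUnion.2 ⟨t, hp, ht⟩)

section Concentration

variable {β : Type*} (lo hi : β → ℝ) (I : Ideal (Set β))

/-- The `V m` accumulate at a point of `[-∞, ∞]` from one side, so that each member of some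
`V m` is separated from all members of a later `V m'`. -/
def IsConcentratingSeq (G : Set β) (V : ℕ → Set β) : Prop :=
  Antitone V ∧ (∀ m, V m ⊆ G) ∧ (∀ m, V m ∉ I) ∧
    ∀ m, ∀ p ∈ V m, ∃ m', ∀ q ∈ V m', ¬ (lo p ≤ hi q ∧ lo q ≤ hi p)

variable {lo hi I}

theorem IsConcentratingSeq.of_neg {G : Set β} {V : ℕ → Set β}
    (h : IsConcentratingSeq (fun p => -hi p) (fun p => -lo p) I G V) :
    IsConcentratingSeq lo hi I G V := by
  refine ⟨h.1, h.2.1, h.2.2.1, fun m p hp => ?_⟩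
  obtain ⟨m', hm'⟩ := h.2.2.2 m p hp
  exact ⟨m', fun q hq hpq => hm' q hq ⟨neg_le_neg hpq.2, neg_le_neg hpq.1⟩⟩

theorem isConcentratingSeq_Ioi {G : Set β} (hG : ∀ m : ℕ, {p ∈ G | (m : ℝ) < lo p} ∉ I) :
    IsConcentratingSeq lo hi I G fun m => {p ∈ G | (m : ℝ) < lo p} := by
  refine ⟨fun m m' hmm' p hp => ⟨hp.1, lt_of_le_of_lt (by exact_mod_cast hmm') hp.2⟩,
    fun m => sep_subset _ _, hG, fun m p hp => ?_⟩
  obtain ⟨m', hm'⟩ := exists_nat_gt (hi p)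
  exact ⟨m', fun q hq hpq => (hm'.trans hq.2).not_ge hpq.2⟩

theorem isConcentratingSeq_right {G : Set β} (α : ℝ)
    (hG : ∀ ε > 0, {p ∈ G | α < lo p ∧ hi p < α + ε} ∉ I) :
    IsConcentratingSeq lo hi I G fun m => {p ∈ G | α < lo p ∧ hi p < α + 1 / (m + 1)} := by
  refine ⟨fun m m' hmm' p hp => ⟨hp.1, hp.2.1, hp.2.2.trans_le ?_⟩, fun m => sep_subset _ _,
    fun m => hG _ Nat.one_div_pos_of_nat, fun m p hp => ?_⟩
  · gcongr
  obtain ⟨m', hm'⟩ := exists_nat_one_div_lt (sub_pos.2 hp.2.1)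
  exact ⟨m', fun q hq hpq => hpq.1.not_gt (by linarith [hq.2.2])⟩

theorem exists_isConcentratingSeq_of_threshold (hpin : ∀ x, {p | x ∈ Icc (lo p) (hi p)} ∈ I)
    {G : Set β} (α : ℝ) (hlt : ∀ x < α, {p ∈ G | hi p < x} ∈ I)
    (hgt : ∀ x > α, {p ∈ G | hi p < x} ∉ I) :
    ∃ V, IsConcentratingSeq lo hi I G V := by
  by_cases hR : ∀ ε > 0, {p ∈ G | α < lo p ∧ hi p < α + ε} ∉ I
  · exact ⟨_, isConcentratingSeq_right α hR⟩
  push Not at hR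
  obtain ⟨ε₀, hε₀, hR⟩ := hR
  -- With pins at `α - ε` and `α`, a pierceable left window and the pierceable right window
  -- would cover `{p ∈ G | hi p < α + ε₀}`.
  have hL : ∀ ε > 0, {p ∈ G | -α < -hi p ∧ -lo p < -α + ε} ∉ I := by
    intro ε hε hL
    refine hgt (α + ε₀) (by linarith) (I.lower ?_ <| I.sup_mem (I.sup_mem (I.sup_mem
      (I.sup_mem (hlt (α - ε) (by linarith)) (hpin (α - ε))) (hpin α)) hL) hR)
    rintro p ⟨hpG, hp⟩
    simp only [Set.sup_eq_union, mem_union, mem_Icc]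
    grind
  exact ⟨_, (isConcentratingSeq_right (lo := fun p => -hi p) (hi := fun p => -lo p) (-α)
    hL).of_neg⟩

theorem exists_isConcentratingSeq (hpin : ∀ x, {p | x ∈ Icc (lo p) (hi p)} ∈ I) {G : Set β}
    (hG : G ∉ I) : ∃ V, IsConcentratingSeq lo hi I G V := by
  have hsplit : ∀ x, {p ∈ G | hi p < x} ∈ I → {p ∈ G | x < lo p} ∉ I := by
    refine fun x hL hR => hG (I.lower ?_ (I.sup_mem (I.sup_mem hL (hpin x)) hR))
    intro p hp
    simp only [Set.sup_eq_union, mem_union, mem_Icc]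
    grind
  by_cases hall : ∀ x, {p ∈ G | hi p < x} ∈ I
  · exact ⟨_, isConcentratingSeq_Ioi fun m => hsplit m (hall m)⟩
  by_cases hnone : ∀ x, {p ∈ G | hi p < x} ∉ I
  · refine ⟨_, (isConcentratingSeq_Ioi (lo := fun p => -hi p) (hi := fun p => -lo p)
      fun m h => hnone (-m) (I.lower ?_ h)).of_neg⟩
    exact fun p hp => ⟨hp.1, lt_neg.1 hp.2⟩
  push Not at hall hnone
  obtain ⟨x₁, hx₁⟩ := hall
  obtain ⟨x₀, hx₀⟩ := hnone
  have hmono : ∀ x y, x ≤ y → {p ∈ G | hi p < y} ∈ I → {p ∈ G | hi p < x} ∈ I :=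
    fun x y hxy => I.lower fun p hp => ⟨hp.1, hp.2.trans_le hxy⟩
  have hbdd : BddAbove {x | {p ∈ G | hi p < x} ∈ I} :=
    ⟨x₁, fun y hy => not_lt.1 fun h => hx₁ (hmono _ _ h.le hy)⟩
  refine exists_isConcentratingSeq_of_threshold hpin (sSup {x | {p ∈ G | hi p < x} ∈ I})
    (fun x hx => ?_) fun x hx hxI => (le_csSup hbdd hxI).not_gt hx
  obtain ⟨y, hy, hxy⟩ := exists_lt_of_lt_csSup ⟨x₀, hx₀⟩ hx
  exact hmono _ _ hxy.le hy

end Concentration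

theorem exists_strictMono_forall_lt_of_eventually {R : ℕ → ℕ → Prop}
    (h : ∀ i, ∀ᶠ j in atTop, R i j) :
    ∃ g : ℕ → ℕ, StrictMono g ∧ ∀ ⦃i j⦄, i < j → R (g i) (g j) := by
  obtain ⟨g, -, hg⟩ := exists_seq_of_forall_finset_exists (fun _ => True)
    (fun i j => i < j ∧ R i j) fun s _ =>
      ((s.eventually_all.2 fun i _ => (eventually_gt_atTop i).and (h i)).exists).imp
        fun _ hj => ⟨trivial, hj⟩
  exact ⟨g, fun i j hij => (hg i j hij).1, fun i j hij => (hg i j hij).2⟩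

def HasUnlinkedSelection (C : Finset (Fin d)) : Prop :=
  ∀ Fam : ℕ → Set (Box d), (∃ᶠ m in atTop, Fam m ∉ pierceIdeal C) →
    ∃ (n : ℕ → ℕ) (B : ℕ → Box d), StrictMono n ∧ (∀ t, B t ∈ Fam (n t)) ∧
      Pairwise fun t t' => ¬ Linked C (B t) (B t')

theorem exists_seq_not_linked_of_erase {C : Finset (Fin d)} {z : Fin d} (hz : z ∈ C)
    (hsel : HasUnlinkedSelection (C.erase z)) {G : Set (Box d)} (hG : G ∉ pierceIdeal C) :
    ∃ B : ℕ → Box d, (∀ t, B t ∈ G) ∧ Pairwise fun t t' => ¬ Linked C (B t) (B t') := by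
  obtain ⟨V, hanti, hVG, hVI, hsep⟩ :=
    exists_isConcentratingSeq (lo := fun p : Box d => p.1 z) (hi := fun p => p.2 z)
      (setOf_mem_Icc_mem_pierceIdeal hz) hG
  obtain ⟨n, B, hn, hB, hlinked⟩ := hsel V <| Frequently.of_forall fun m h =>
    hVI m (pierceIdeal_mono (C.erase_subset z) h)
  have hev : ∀ t, ∀ᶠ t' in atTop, ¬ OverlapsAt z (B t) (B t') := fun t => by
    obtain ⟨m', hm'⟩ := hsep _ _ (hB t)
    filter_upwards [hn.tendsto_atTop.eventually_ge_atTop m'] with t' ht'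
    exact hm' _ (hanti ht' (hB t'))
  obtain ⟨g, hg, hgz⟩ := exists_strictMono_forall_lt_of_eventually hev
  refine ⟨B ∘ g, fun t => hVG _ (hB _), pairwise_not_linked_of_lt fun t t' htt' => ?_⟩
  rintro ⟨i, hi, hov⟩
  by_cases hiz : i = z
  · exact hgz htt' (hiz ▸ hov)
  · exact hlinked (hg.injective.ne htt'.ne) ⟨i, Finset.mem_erase.2 ⟨hiz, hi⟩, hov⟩

def residual (C : Finset (Fin d)) (Φ : ℕ → Set (Box d)) (m : ℕ) (J : Box d) :
    ℕ → Set (Box d) :=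
  fun m' => {p ∈ Φ m' | m < m' ∧ ¬ Linked C p J}

theorem exists_frequently_residual {C : Finset (Fin d)}
    (hseq : ∀ G ∉ pierceIdeal C, ∃ B : ℕ → Box d, (∀ t, B t ∈ G) ∧
      Pairwise fun t t' => ¬ Linked C (B t) (B t'))
    {Φ : ℕ → Set (Box d)} (hΦ : ∃ᶠ m in atTop, Φ m ∉ pierceIdeal C) :
    ∃ m, ∃ J ∈ Φ m, ∃ᶠ m' in atTop, residual C Φ m J m' ∉ pierceIdeal C := by
  obtain ⟨m, hm⟩ := hΦ.exists
  obtain ⟨B, hB, hBl⟩ := hseq _ hm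
  have hlater : ∃ᶠ m' in atTop, {p ∈ Φ m' | m < m'} ∉ pierceIdeal C :=
    (hΦ.and_eventually (eventually_gt_atTop m)).mono fun m' ⟨h, hmm'⟩ h' =>
      h ((pierceIdeal C).lower (by intro p hp; exact ⟨hp, hmm'⟩) h')
  obtain ⟨t, ht⟩ := exists_frequently_not_linked (ι := Fin (C.card + 1)) (J := B ∘ Fin.val)
    (by simp) (hBl.comp_of_injective Fin.val_injective) hlater
  exact ⟨m, B t, hB t, ht.mono fun m' h h' =>
    h ((pierceIdeal C).lower (by intro p hp; exact ⟨hp.1.1, hp.1.2, hp.2⟩) h')⟩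

theorem hasUnlinkedSelection_of_forall_exists_seq {C : Finset (Fin d)}
    (hseq : ∀ G ∉ pierceIdeal C, ∃ B : ℕ → Box d, (∀ t, B t ∈ G) ∧
      Pairwise fun t t' => ¬ Linked C (B t) (B t')) :
    HasUnlinkedSelection C := by
  intro Fam hFam
  choose! m J hJ hres using fun (Φ : ℕ → Set (Box d)) (hΦ : ∃ᶠ m in atTop, Φ m ∉ pierceIdeal C) =>
    exists_frequently_residual hseq hΦ
  set Φ : ℕ → ℕ → Set (Box d) := fun t => (fun Φ => residual C Φ (m Φ) (J Φ))^[t] Fam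
  have hΦ_succ : ∀ t, Φ (t + 1) = residual C (Φ t) (m (Φ t)) (J (Φ t)) := fun t =>
    Function.iterate_succ_apply' _ _ _
  have hΦI : ∀ t, ∃ᶠ m' in atTop, Φ t m' ∉ pierceIdeal C := by
    intro t
    induction t with
    | zero => exact hFam
    | succ t ih => rw [hΦ_succ]; exact hres _ ih
  have hanti : Antitone Φ :=
    antitone_nat_of_succ_le fun t m' p hp => by rw [hΦ_succ] at hp; exact hp.1
  refine ⟨fun t => m (Φ t), fun t => J (Φ t), strictMono_nat_of_lt_succ fun t => ?_,
    fun t => hanti (Nat.zero_le t) _ (hJ _ (hΦI t)), pairwise_not_linked_of_lt fun t t' htt' => ?_⟩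
  · exact ((hΦ_succ t).le _ (hJ _ (hΦI (t + 1)))).2.1
  · exact fun hl => ((hΦ_succ t).le _ (hanti htt' _ (hJ _ (hΦI t')))).2.2 hl.symm

theorem hasUnlinkedSelection (C : Finset (Fin d)) : HasUnlinkedSelection C := by
  induction C using Finset.strongInduction with
  | H C ih =>
    refine hasUnlinkedSelection_of_forall_exists_seq fun G hG => ?_
    rcases C.eq_empty_or_nonempty with rfl | ⟨z, hz⟩
    · obtain ⟨p, hp⟩ : G.Nonempty :=
        nonempty_iff_ne_empty.2 fun h => hG (by rw [h]; exact Ideal.bot_mem _)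
      exact ⟨fun _ => p, fun _ => hp, fun _ _ _ ⟨_, hi, _⟩ => Finset.notMem_empty _ hi⟩
    · exact exists_seq_not_linked_of_erase hz (ih _ (Finset.erase_ssubset hz)) hG

theorem sub_le_card_of_forall_inter_nonempty {α : Type*} [Fintype α] [DecidableEq α]
    {D : Finset α} {k : ℕ} (h : ∀ W : Finset α, W.card = k + 1 → (W ∩ D).Nonempty) :
    Fintype.card α - k ≤ D.card := by
  by_contra! hlt
  obtain ⟨W, hWD, hW⟩ := Finset.exists_subset_card_eq (s := Dᶜ) (n := k + 1)
    (by rw [Finset.card_compl]; omega)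
  obtain ⟨i, hi⟩ := h W hW
  exact Finset.mem_compl.1 (hWD (Finset.mem_inter.1 hi).1) (Finset.mem_inter.1 hi).2

theorem piercedByFlats_of_forall_exists {k : ℕ} {F : Set (Set (Fin d → ℝ))} (vals : Finset ℝ)
    (h : ∀ B ∈ F, ∃ I : Finset (Fin d), I.card = d - k ∧ ∃ x ∈ B, ∀ i ∈ I, x i ∈ vals) :
    PiercedByFlats k F := by
  classical
  refine ⟨(Finset.univ.powersetCard (d - k) ×ˢ Fintype.piFinset fun _ => insert 0 vals).image
    fun Ic => {x | ∀ i ∈ Ic.1, x i = Ic.2 i}, ?_, fun B hB => ?_⟩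
  · simp only [Finset.mem_image, Finset.mem_product, Finset.mem_powersetCard]
    rintro _ ⟨Ic, ⟨⟨-, hI⟩, -⟩, rfl⟩
    exact ⟨Ic.1, Ic.2, hI, rfl⟩
  obtain ⟨I, hI, x, hxB, hx⟩ := h B hB
  refine ⟨{y | ∀ i ∈ I, y i = I.piecewise x 0 i},
    Finset.mem_image.2 ⟨(I, I.piecewise x 0), ?_, rfl⟩, x, hxB,
    fun i hi => (Finset.piecewise_eq_of_mem _ _ _ hi).symm⟩
  refine Finset.mem_product.2 ⟨Finset.mem_powersetCard.2 ⟨Finset.subset_univ _, hI⟩,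
    Fintype.mem_piFinset.2 fun i => ?_⟩
  by_cases hi : i ∈ I
  · simpa [hi] using Or.inr (hx i hi)
  · simp [hi]

/-- If `F` could be pierced along every set `W` of `k + 1` axes, the values of all these
hyperplanes would fix at least `d - k` coordinates of a point in each box. -/
theorem exists_card_eq_not_mem_pierceIdeal {k : ℕ} {F : Set (Set (Fin d → ℝ))}
    (hbox : ∀ B ∈ F, IsBox B) (hF : ¬ PiercedByFlats k F) :
    ∃ W : Finset (Fin d), W.card = k + 1 ∧ boxesOf F ∉ pierceIdeal W := by
  classical
  by_contra! h
  choose! H hHW hH using fun W (hW : W ∈ Finset.univ.powersetCard (k + 1)) =>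
    h W (Finset.mem_powersetCard.1 hW).2
  set vals := ((Finset.univ.powersetCard (k + 1)).biUnion H).image Prod.snd
  refine hF (piercedByFlats_of_forall_exists vals fun B hB => ?_)
  obtain ⟨a, b, hab, rfl⟩ := hbox B hB
  set D := Finset.univ.filter fun i => ∃ v ∈ vals, v ∈ Icc (a i) (b i)
  have hD : ∀ W : Finset (Fin d), W.card = k + 1 → (W ∩ D).Nonempty := by
    intro W hW
    have hWmem : W ∈ Finset.univ.powersetCard (k + 1) := by simpa using hW
    obtain ⟨h, hh, hmem⟩ := hH W hWmem (a, b) hB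
    refine ⟨h.1, Finset.mem_inter.2 ⟨hHW W hWmem h hh, Finset.mem_filter.2
      ⟨Finset.mem_univ _, h.2, Finset.mem_image.2 ⟨h, Finset.mem_biUnion.2 ⟨W, hWmem, hh⟩, rfl⟩,
        hmem⟩⟩⟩
  obtain ⟨I, hID, hI⟩ := Finset.exists_subset_card_eq (s := D) (n := d - k)
    (by simpa using sub_le_card_of_forall_inter_nonempty hD)
  choose! v hv hvab using fun i (hi : i ∈ D) => (Finset.mem_filter.1 hi).2
  refine ⟨I, hI, D.piecewise v a, fun i => ?_, fun i hi => ?_⟩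
  · by_cases hi : i ∈ D
    · simpa [hi] using hvab i hi
    · simpa [hi] using hab i
  · simpa [hID hi] using hv i (hID hi)

theorem linked_of_inter_nonempty {k : ℕ} {W : Finset (Fin d)} (hW : W.card = k + 1)
    {K : Set (Fin d → ℝ)} (hK : IsAxisFlat k K) {p q : Box d} (hp : (K ∩ p.toSet).Nonempty)
    (hq : (K ∩ q.toSet).Nonempty) : Linked W p q := by
  classical
  obtain ⟨I, c, hI, rfl⟩ := hK
  have hcard : (Finset.univ : Finset (Fin d)).card < I.card + W.card := by
    have := W.card_le_univ
    simp only [Finset.card_univ, Fintype.card_fin] at *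
    omega
  obtain ⟨i, hi⟩ := Finset.inter_nonempty_of_card_lt_card_add_card (Finset.subset_univ I)
    (Finset.subset_univ W) hcard
  obtain ⟨hiI, hiW⟩ := Finset.mem_inter.1 hi
  obtain ⟨x, hxK, hxp⟩ := hp
  obtain ⟨y, hyK, hyq⟩ := hq
  have hxy : x i = y i := (hxK i hiI).trans (hyK i hiI).symm
  exact ⟨i, hiW, (hxp i).1.trans (hxy ▸ (hyq i).2), (hyq i).1.trans (hxy ▸ (hxp i).2)⟩

end BoxPiercing

open BoxPiercing

theorem stmt16_general (d k : ℕ)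
    (F : ℕ → Set (Set (Fin d → ℝ)))
    (hbox : ∀ n, ∀ B ∈ F n, IsBox B)
    (hnp : ∀ n, ¬ PiercedByFlats k (F n)) :
    ∃ (n : ℕ → ℕ) (B : ℕ → Set (Fin d → ℝ)),
      StrictMono n ∧ (∀ m, B m ∈ F (n m)) ∧
      ∀ m m' : ℕ, m ≠ m' → ∀ K, IsAxisFlat k K →
        ¬ ((K ∩ B m).Nonempty ∧ (K ∩ B m').Nonempty) := by
  obtain ⟨W, hW⟩ : ∃ W : Finset (Fin d), ∃ᶠ n in atTop,
      W.card = k + 1 ∧ boxesOf (F n) ∉ pierceIdeal W :=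
    frequently_exists.1 <| Frequently.of_forall fun n =>
      exists_card_eq_not_mem_pierceIdeal (hbox n) (hnp n)
  obtain ⟨-, hcard, -⟩ := hW.exists
  obtain ⟨n, B, hn, hB, hunlinked⟩ := hasUnlinkedSelection W _ (hW.mono fun _ h => h.2)
  exact ⟨n, fun t => (B t).toSet, hn, hB, fun m m' hmm' K hK ⟨hm, hm'⟩ =>
    hunlinked hmm' (linked_of_inter_nonempty hcard hK hm hm')⟩

theorem stmt16 (d k : ℕ) (hk : k < d)
    (F : ℕ → Set (Set (Fin d → ℝ)))
    (hbox : ∀ n, ∀ B ∈ F n, IsBox B)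
    (hnp : ∀ n, ¬ PiercedByFlats k (F n)) :
    ∃ (n : ℕ → ℕ) (B : ℕ → Set (Fin d → ℝ)),
      StrictMono n ∧ (∀ m, B m ∈ F (n m)) ∧
      ∀ m m' : ℕ, m ≠ m' → ∀ K, IsAxisFlat k K →
        ¬ ((K ∩ B m).Nonempty ∧ (K ∩ B m').Nonempty) :=
  stmt16_general d k F hbox hnp
end

section
/- Let F be a family of axis-parallel boxes in ℝ^d not pierceable by finitely many axis-parallel hyperplanes, let S = ∏_{j=1}^{d'} [a_j, b_j] × ℝ^{d−d'} be a strip containing every box of F, and for j ∈ {1,…,d'} let c_j = (a_j + b_j)/2 and H_j = {x : x_j = c_j}. Then there exists a choice of signs ε ∈ {1,2}^{d'} such that the subfamily of boxes of F contained in the substrip ∏_{j=1}^{d'} A_j^{ε_j} × ℝ^{d−d'}, where A_j^1 = [a_j, c_j] and A_j^2 = [c_j, b_j], and disjoint from all H_j, is itself not pierceable by finitely many axis-parallel hyperplanes. -/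
open Set

lemma box_side {d : ℕ} (B : Set (Fin d → ℝ)) (hB : IsBox B) (j : Fin d) (c : ℝ)
    (hdisj : B ∩ {x | x j = c} = ∅) :
    (B ⊆ {x | x j ≤ c}) ∨ (B ⊆ {x | c ≤ x j}) := by
  obtain ⟨u, v, huv, rfl⟩ := hB
  by_cases h1 : c < u j
  · right; intro x hx; exact le_of_lt (lt_of_lt_of_le h1 (hx j).1)
  · by_cases h2 : v j < c
    · left; intro x hx; exact le_of_lt (lt_of_le_of_lt (hx j).2 h2)
    · exfalso
      push_neg at h1 h2
      have hmem : Function.update u j c ∈ ({x | ∀ i, x i ∈ Set.Icc (u i) (v i)} : Set (Fin d → ℝ)) ∩ {x | x j = c} := by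
        constructor
        · intro i
          by_cases hij : i = j
          · subst hij; simp [Function.update_self, h1, h2]
          · simp [Function.update_of_ne hij, huv i]
        · simp [Function.update_self]
      rw [hdisj] at hmem
      exact hmem

theorem stmt18 (d d' : ℕ) (hd' : d' ≤ d)
    (F : Set (Set (Fin d → ℝ))) (hbox : ∀ B ∈ F, IsBox B)
    (hnp : ¬ PiercedByHyperplanes F)
    (a b : Fin d → ℝ) (hab : ∀ j, a j ≤ b j)
    (hstrip : ∀ B ∈ F, B ⊆ {x | ∀ j : Fin d, (j : ℕ) < d' → x j ∈ Set.Icc (a j) (b j)}) :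
    ∃ ε : Fin d → Bool,
      ¬ PiercedByHyperplanes
        {B ∈ F |
          (B ⊆ {x | ∀ j : Fin d, (j : ℕ) < d' →
            x j ∈ (if ε j then Set.Icc (a j) ((a j + b j) / 2)
                   else Set.Icc ((a j + b j) / 2) (b j))}) ∧
          ∀ j : Fin d, (j : ℕ) < d' → B ∩ {x | x j = (a j + b j) / 2} = ∅} := by
  classical
  by_contra h
  push_neg at h
  set c : Fin d → ℝ := fun j => (a j + b j) / 2 with hc
  -- For each ε, a piercing family
  have hpick : ∀ ε : Fin d → Bool, ∃ H : Finset (Set (Fin d → ℝ)),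
      (∀ f ∈ H, IsAxisHyperplane f) ∧
      ∀ B ∈ {B ∈ F |
          (B ⊆ {x | ∀ j : Fin d, (j : ℕ) < d' →
            x j ∈ (if ε j then Set.Icc (a j) ((a j + b j) / 2)
                   else Set.Icc ((a j + b j) / 2) (b j))}) ∧
          ∀ j : Fin d, (j : ℕ) < d' → B ∩ {x | x j = (a j + b j) / 2} = ∅},
        ∃ f ∈ H, (B ∩ f).Nonempty := fun ε => h ε
  choose Hs hHs1 hHs2 using hpick
  apply hnp
  refine ⟨(Finset.univ : Finset (Fin d → Bool)).biUnion Hs ∪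
      Finset.image (fun j : Fin d => {x : Fin d → ℝ | x j = c j}) Finset.univ, ?_, ?_⟩
  · intro f hf
    rcases Finset.mem_union.1 hf with hf | hf
    · obtain ⟨ε, _, hfε⟩ := Finset.mem_biUnion.1 hf
      exact hHs1 ε f hfε
    · obtain ⟨j, _, rfl⟩ := Finset.mem_image.1 hf
      exact ⟨j, c j, rfl⟩
  · intro B hBF
    by_cases hmeet : ∃ j : Fin d, (j : ℕ) < d' ∧ (B ∩ {x | x j = c j}).Nonempty
    · obtain ⟨j, _, hne⟩ := hmeet
      refine ⟨{x | x j = c j}, ?_, hne⟩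
      exact Finset.mem_union_right _ (Finset.mem_image.2 ⟨j, Finset.mem_univ _, rfl⟩)
    · push_neg at hmeet
      have hdisj : ∀ j : Fin d, (j : ℕ) < d' → B ∩ {x | x j = c j} = ∅ := by
        intro j hj
        exact hmeet j hj
      set ε : Fin d → Bool := fun j => decide (B ⊆ {x | x j ≤ c j}) with hε
      have hBmem : B ∈ {B ∈ F |
          (B ⊆ {x | ∀ j : Fin d, (j : ℕ) < d' →
            x j ∈ (if ε j then Set.Icc (a j) ((a j + b j) / 2)
                   else Set.Icc ((a j + b j) / 2) (b j))}) ∧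
          ∀ j : Fin d, (j : ℕ) < d' → B ∩ {x | x j = (a j + b j) / 2} = ∅} := by
        refine ⟨hBF, ?_, hdisj⟩
        intro x hx j hj
        have hxs := hstrip B hBF hx j hj
        by_cases hside : B ⊆ {x | x j ≤ c j}
        · have : ε j = true := by simp [hε, hside]
          rw [this]
          simp only [if_true]
          exact ⟨hxs.1, hside hx⟩
        · have hεf : ε j = false := by simp [hε, hside]
          rw [hεf]
          simp only [if_false, Bool.false_eq_true]
          have hright : B ⊆ {x | c j ≤ x j} :=
            (box_side B (hbox B hBF) j (c j) (hdisj j hj)).resolve_left hside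
          exact ⟨hright hx, hxs.2⟩
      obtain ⟨f, hfH, hfne⟩ := hHs2 ε B hBmem
      exact ⟨f, Finset.mem_union_left _ (Finset.mem_biUnion.2 ⟨ε, Finset.mem_univ _, hfH⟩), hfne⟩
end
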